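/- arXiv:2403.18653 — 12 statements merged into one kernel-verified Lean document; each statement's English description precedes it below -/
import Mathlib

section
/- Let A be a brace. Then Fix(A) ∩ Z(A,∘) ⊆ Soc(A); that is, if a ∈ A satisfies λ_b(a) = a for all b ∈ A and a is central in the group (A,∘), then λ_a = id, i.e. a∘b = a + b for all b ∈ A. -/
/-- A (left) brace on an additive abelian group `A`: a second group operation `circ`
(with identity `0` and inverse `inv`) satisfying `a ∘ (b + c) = a ∘ b - a + a ∘ c`. -/
structure Brace (A : Type*) [AddCommGroup A] where
  circ : A → A → A
  inv : A → A
  circ_assoc : ∀ a b c : A, circ (circ a b) c = circ a (circ b c)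
  zero_circ : ∀ a : A, circ 0 a = a
  circ_zero : ∀ a : A, circ a 0 = a
  inv_circ : ∀ a : A, circ (inv a) a = 0
  circ_add : ∀ a b c : A, circ a (b + c) = circ a b - a + circ a c

/-- The λ-map of a brace: `λ_a(b) = -a + a ∘ b`. -/
def Brace.lam {A : Type*} [AddCommGroup A] (B : Brace A) (a b : A) : A :=
  -a + B.circ a b

theorem stmt1 {A : Type*} [AddCommGroup A] (Br : Brace A) (a : A)
    (hfix : ∀ b : A, Br.lam b a = a)
    (hcent : ∀ b : A, Br.circ a b = Br.circ b a) :
    ∀ b : A, Br.circ a b = a + b := by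
  intro b
  have h := hfix b
  unfold Brace.lam at h
  rw [hcent b, add_comm]
  conv_rhs => rw [← h]
  abel
end

section
/- Let A be a brace and B ⊆ A a subbrace (a subgroup of both (A,+) and (A,∘)) such that λ_b(a) − a ∈ B for all b ∈ B and all a ∈ A (i.e. (B,∘) acts trivially on the quotient group (A,+)/(B,+) under the λ-action), and such that B is a normal subgroup of (A,∘). Then B is an ideal of A; in particular λ_a(b) ∈ B for all a ∈ A and b ∈ B. -/
theorem stmt2 {A : Type*} [AddCommGroup A] (Br : Brace A) (B : Set A)
    (hzero : (0 : A) ∈ B)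
    (hadd : ∀ x ∈ B, ∀ y ∈ B, x + y ∈ B)
    (hneg : ∀ x ∈ B, -x ∈ B)
    (hcirc : ∀ x ∈ B, ∀ y ∈ B, Br.circ x y ∈ B)
    (hinv : ∀ x ∈ B, Br.inv x ∈ B)
    (htriv : ∀ b ∈ B, ∀ a : A, Br.lam b a - a ∈ B)
    (hnorm : ∀ a : A, ∀ b ∈ B, Br.circ (Br.circ a b) (Br.inv a) ∈ B) :
    ∀ a : A, ∀ b ∈ B, Br.lam a b ∈ B := by
  intro a b hb
  set c := Br.circ (Br.circ a b) (Br.inv a) with hc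
  have hcB : c ∈ B := hnorm a b hb
  have hca : Br.circ c a = Br.circ a b := by
    rw [hc, Br.circ_assoc, Br.inv_circ, Br.circ_zero]
  have key : Br.lam a b = (Br.lam c a - a) + c := by
    simp only [Brace.lam, hca]
    abel
  rw [key]
  exact hadd _ (htriv c hcB a) _ hcB
end

section
/- Let p be a prime and A a finite brace whose cardinality is a power of p. If B ⊆ A is a subbrace with |A| = p·|B|, then B is an ideal of A: B is a normal subgroup of (A,∘) and λ_a(b) ∈ B for all a ∈ A and b ∈ B. -/
namespace BraceAux

variable {A : Type*} [AddCommGroup A]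

/-- Type synonym for `A` carrying the multiplicative group structure `circ`. -/
def Grp (_Br : Brace A) : Type _ := A

instance (Br : Brace A) : Group (Grp Br) where
  mul := Br.circ
  one := (0 : A)
  inv := Br.inv
  mul_assoc := Br.circ_assoc
  one_mul := Br.zero_circ
  mul_one := Br.circ_zero
  inv_mul_cancel := Br.inv_circ

variable (Br : Brace A)

instance [Fintype A] : Fintype (Grp Br) := inferInstanceAs (Fintype A)

/-- The identity map `A ≃ Grp Br`. -/
def toG : A ≃ Grp Br := Equiv.refl A

lemma toG_mul (a b : A) : toG Br (Br.circ a b) = toG Br a * toG Br b := rfl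

lemma toG_zero : toG Br 0 = 1 := rfl

lemma toG_inv (a : A) : toG Br (Br.inv a) = (toG Br a)⁻¹ := rfl

lemma card_def [Fintype A] : Fintype.card (Grp Br) = Fintype.card A := rfl

lemma lam_add (a x y : A) : Br.lam a (x + y) = Br.lam a x + Br.lam a y := by
  simp only [Brace.lam, Br.circ_add]
  abel

/-- `λ_a` as an additive group homomorphism. -/
def lamHom (a : A) : A →+ A := AddMonoidHom.mk' (Br.lam a) (lam_add Br a)

lemma circ_eq_add_lam (a b : A) : Br.circ a b = a + Br.lam a b := by
  simp [Brace.lam]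

lemma circ_neg (a b : A) : Br.circ a (-b) = a - Br.circ a b + a := by
  have h := Br.circ_add a b (-b)
  rw [add_neg_cancel, Br.circ_zero] at h
  have h2 : Br.circ a (-b) = a - (Br.circ a b - a) := eq_sub_of_add_eq' h.symm
  rw [h2]
  abel

lemma lam_circ (a b x : A) : Br.lam (Br.circ a b) x = Br.lam a (Br.lam b x) := by
  simp only [Brace.lam]
  rw [Br.circ_add, circ_neg, ← Br.circ_assoc]
  abel

lemma lam_zero_left (x : A) : Br.lam 0 x = x := by
  simp [Brace.lam, Br.zero_circ]

lemma lam_injective (a : A) : Function.Injective (Br.lam a) := by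
  intro x y h
  have h2 : Br.circ a x = Br.circ a y := by
    have := congrArg (fun z => a + z) h
    simpa [Brace.lam] using this
  have h3 : toG Br a * toG Br x = toG Br a * toG Br y := by
    rw [← toG_mul, ← toG_mul, h2]
  have h4 : toG Br x = toG Br y := mul_left_cancel h3
  exact (toG Br).injective h4

lemma lam_inv_self (a : A) : Br.lam a (Br.inv a) = -a := by
  have h0 : toG Br (Br.circ a (Br.inv a)) = toG Br 0 := by
    rw [toG_mul, toG_inv, toG_zero, mul_inv_cancel]
  have h : Br.circ a (Br.inv a) = 0 := (toG Br).injective h0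
  simp [Brace.lam, h]

lemma lam_pow (b : A) :
    ∀ m : ℕ, ∀ x : A, Br.lam ((toG Br).symm ((toG Br b) ^ m)) x = (Br.lam b)^[m] x := by
  intro m
  induction m with
  | zero =>
      intro x
      rw [pow_zero, ← toG_zero, Equiv.symm_apply_apply]
      exact lam_zero_left Br x
  | succ n ih =>
      intro x
      have hpow : (toG Br b) ^ (n + 1) = toG Br b * (toG Br b) ^ n := pow_succ' _ _
      have hmul : (toG Br).symm (toG Br b * (toG Br b) ^ n) =
          Br.circ b ((toG Br).symm ((toG Br b) ^ n)) := by
        apply (toG Br).injective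
        rw [Equiv.apply_symm_apply, toG_mul, Equiv.apply_symm_apply]
      rw [hpow, hmul, lam_circ, Function.iterate_succ_apply', ih x]

/-- The key identity: `a ∘ c ∘ a^{-1} = λ_a (c + (λ_c(a⁻¹) - a⁻¹))`. -/
lemma conj_eq (a c : A) :
    Br.circ (Br.circ a c) (Br.inv a) =
      Br.lam a (c + (Br.lam c (Br.inv a) - Br.inv a)) := by
  have h1 : Br.lam a (c + (Br.lam c (Br.inv a) - Br.inv a)) =
      Br.lam a c + Br.lam a (Br.lam c (Br.inv a)) - Br.lam a (Br.inv a) := by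
    have hs := map_sub (lamHom Br a) (Br.lam c (Br.inv a)) (Br.inv a)
    simp only [lamHom, AddMonoidHom.mk'_apply] at hs
    rw [lam_add Br a c (Br.lam c (Br.inv a) - Br.inv a), hs]
    abel
  rw [h1, lam_inv_self, ← lam_circ]
  simp only [Brace.lam]
  abel

end BraceAux

open BraceAux in
theorem stmt3 {p : ℕ} (hp : p.Prime) {A : Type*} [AddCommGroup A] [Fintype A]
    (Br : Brace A) (hcard : ∃ n : ℕ, Fintype.card A = p ^ n)
    (B : Set A)
    (hzero : (0 : A) ∈ B)
    (hadd : ∀ x ∈ B, ∀ y ∈ B, x + y ∈ B)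
    (hneg : ∀ x ∈ B, -x ∈ B)
    (hcirc : ∀ x ∈ B, ∀ y ∈ B, Br.circ x y ∈ B)
    (hinv : ∀ x ∈ B, Br.inv x ∈ B)
    (hBcard : Fintype.card A = p * Nat.card B) :
    (∀ a : A, ∀ b ∈ B, Br.circ (Br.circ a b) (Br.inv a) ∈ B) ∧
    (∀ a : A, ∀ b ∈ B, Br.lam a b ∈ B) := by
  haveI hfp : Fact p.Prime := ⟨hp⟩
  obtain ⟨n, hn⟩ := hcard
  -- `B` as a subgroup of the multiplicative group `(A, ∘)`
  let S : Subgroup (Grp Br) :=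
    { carrier := B
      mul_mem' := fun {x y} hx hy => hcirc x hx y hy
      one_mem' := hzero
      inv_mem' := fun {x} hx => hinv x hx }
  have hmemS : ∀ x : A, toG Br x ∈ S ↔ x ∈ B := fun x => Iff.rfl
  have hcardS : Nat.card S = Nat.card B := rfl
  haveI : Nonempty S := ⟨⟨toG Br 0, hzero⟩⟩
  have hposS : 0 < Nat.card S := Nat.card_pos
  have hNatG : Nat.card (Grp Br) = p * Nat.card B := by
    have h : Nat.card (Grp Br) = Fintype.card A := Nat.card_eq_fintype_card
    rw [h, hBcard]
  have hcardG : Nat.card (Grp Br) = p ^ n := by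
    have h : Nat.card (Grp Br) = Fintype.card A := Nat.card_eq_fintype_card
    rw [h, hn]
  -- index of `S` is `p`
  have hidx : S.index = p := by
    have h := Subgroup.card_mul_index S
    rw [hNatG, ← hcardS, mul_comm p _] at h
    exact Nat.eq_of_mul_eq_mul_left hposS h
  -- `S` is a maximal subgroup
  have hcoatom : IsCoatom S := by
    constructor
    · intro htop
      have h1 : S.index = 1 := by rw [htop, Subgroup.index_top]
      rw [hidx] at h1
      exact hp.one_lt.ne' h1
    · intro K hSK
      have hle : S ≤ K := le_of_lt hSK
      have hm : S.relIndex K * K.index = S.index := Subgroup.relIndex_mul_index hle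
      rw [hidx] at hm
      have hKdvd : K.index ∣ p := Dvd.intro_left _ hm
      rcases (Nat.Prime.eq_one_or_self_of_dvd hp _ hKdvd) with h1 | h1
      · exact Subgroup.index_eq_one.mp h1
      · exfalso
        rw [h1] at hm
        have hrel : S.relIndex K = 1 := by
          have hppos : 0 < p := hp.pos
          nlinarith [hm]
        have : K ≤ S := Subgroup.relIndex_eq_one.mp hrel
        exact (not_le_of_gt hSK) this
  -- `S` is normal: p-groups are nilpotent, hence satisfy the normalizer condition
  haveI : Finite (Grp Br) := inferInstanceAs (Finite A)
  have hpG : IsPGroup p (Grp Br) := IsPGroup.of_card hcardG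
  haveI : Group.IsNilpotent (Grp Br) := hpG.isNilpotent
  have hnormal : S.Normal :=
    Subgroup.NormalizerCondition.normal_of_coatom S normalizerCondition_of_isNilpotent hcoatom
  have part1 : ∀ a : A, ∀ b ∈ B, Br.circ (Br.circ a b) (Br.inv a) ∈ B := by
    intro a b hb
    have h := hnormal.conj_mem (toG Br b) ((hmemS b).mpr hb) (toG Br a)
    have he : toG Br a * toG Br b * (toG Br a)⁻¹ =
        toG Br (Br.circ (Br.circ a b) (Br.inv a)) := by
      rw [toG_mul, toG_mul, toG_inv]
    rw [he] at h
    exact (hmemS _).mp h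
  refine ⟨part1, ?_⟩
  -- `B` as an additive subgroup
  let B' : AddSubgroup A :=
    { carrier := B
      add_mem' := fun {x y} hx hy => hadd x hx y hy
      zero_mem' := hzero
      neg_mem' := fun {x} hx => hneg x hx }
  have hcardB' : Nat.card B' = Nat.card B := rfl
  haveI : Nonempty B' := ⟨⟨0, hzero⟩⟩
  have hposB' : 0 < Nat.card B' := Nat.card_pos
  -- the quotient has cardinality p
  have hQcard : Nat.card (A ⧸ B') = p := by
    have h := AddSubgroup.card_mul_index B'
    have hA : Nat.card A = p * Nat.card B := by
      rw [Nat.card_eq_fintype_card]; exact hBcard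
    rw [hA, hcardB', mul_comm p _] at h
    have h2 := Nat.eq_of_mul_eq_mul_left (hcardB' ▸ hposB') h
    rw [← AddSubgroup.index_eq_card, h2]
  -- Step A: for `b ∈ B`, `λ_b x - x ∈ B` for all `x`
  have stepA : ∀ b ∈ B, ∀ x : A, Br.lam b x - x ∈ B := by
    intro b hb x
    have hlamB : ∀ y ∈ B, Br.lam b y ∈ B := by
      intro y hy
      have hrw : Br.lam b y = -b + Br.circ b y := rfl
      rw [hrw]
      exact hadd _ (hneg b hb) _ (hcirc b hb y hy)
    have hle : B' ≤ B'.comap (lamHom Br b) := fun y hy => hlamB y hy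
    set π : A →+ A ⧸ B' := QuotientAddGroup.mk' B' with hπ
    set f : A ⧸ B' →+ A ⧸ B' := QuotientAddGroup.map B' B' (lamHom Br b) hle with hf
    have hcomm : ∀ y : A, π (Br.lam b y) = f (π y) := by
      intro y
      rw [hf, hπ, QuotientAddGroup.map_mk']
      rfl
    -- `f` iterated `N = card A` times is the identity
    set N := Fintype.card A with hN
    have hNpos : 0 < N := Fintype.card_pos
    have hbN : (toG Br b) ^ N = 1 := by
      have : Fintype.card (Grp Br) = N := rfl
      rw [← this]
      exact pow_card_eq_one
    have hlamN : ∀ y : A, (Br.lam b)^[N] y = y := by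
      intro y
      have h := (lam_pow Br b N y).symm
      rw [hbN, ← toG_zero, Equiv.symm_apply_apply] at h
      rw [h, lam_zero_left]
    have hiter : ∀ m : ℕ, ∀ y : A, π ((Br.lam b)^[m] y) = f^[m] (π y) := by
      intro m
      induction m with
      | zero => intro y; rfl
      | succ k ih =>
          intro y
          rw [Function.iterate_succ_apply', Function.iterate_succ_apply', hcomm, ih]
    have hfN : ∀ q : A ⧸ B', f^[N] q = q := by
      intro q
      obtain ⟨y, rfl⟩ := QuotientAddGroup.mk'_surjective B' q
      have h := hiter N y
      rw [hlamN] at h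
      exact h.symm
    -- `f` is the identity on the quotient of prime order
    have hfid : ∀ q : A ⧸ B', f q = q := by
      intro q
      by_cases hq : q = 0
      · rw [hq, map_zero]
      · -- `q` has additive order `p`
        have hord : addOrderOf q = p := by
          have hdvd : addOrderOf q ∣ p := by
            have h := addOrderOf_dvd_natCard q
            rwa [hQcard] at h
          rcases hp.eq_one_or_self_of_dvd _ hdvd with h | h
          · exact absurd (AddMonoid.addOrderOf_eq_one_iff.mp h) hq
          · exact h
        -- `q` generates the whole quotient
        have htop : AddSubgroup.zmultiples q = ⊤ := by
          apply AddSubgroup.eq_top_of_card_eq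
          rw [Nat.card_zmultiples, hord, hQcard]
        have hfq : f q ∈ AddSubgroup.zmultiples q := by
          rw [htop]; trivial
        obtain ⟨k, hk⟩ := AddSubgroup.mem_zmultiples_iff.mp hfq
        -- iterating: `f^[m] q = k^m • q`
        have hpowk : ∀ m : ℕ, f^[m] q = (k ^ m : ℤ) • q := by
          intro m
          induction m with
          | zero => simp
          | succ j ih =>
              rw [Function.iterate_succ_apply', ih, map_zsmul, ← hk, smul_smul, ← pow_succ]
        have hkN : (k ^ N - 1 : ℤ) • q = 0 := by
          have h1 : (k ^ N : ℤ) • q = q := by rw [← hpowk, hfN]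
          rw [sub_smul, h1, one_zsmul, sub_self]
        have hdvd1 : ((p : ℤ)) ∣ (k ^ N - 1) := by
          have h := addOrderOf_dvd_iff_zsmul_eq_zero.mpr hkN
          rwa [hord] at h
        -- pass to `ZMod p`
        have hK : ((k : ZMod p)) ^ N = 1 := by
          have h0 : ((k ^ N - 1 : ℤ) : ZMod p) = 0 :=
            (ZMod.intCast_zmod_eq_zero_iff_dvd _ p).mpr hdvd1
          push_cast at h0
          linear_combination h0
        have hKne : (k : ZMod p) ≠ 0 := by
          intro h0
          rw [h0, zero_pow hNpos.ne'] at hK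
          exact one_ne_zero hK.symm
        have hord1 : orderOf ((k : ZMod p)) ∣ p ^ n := by
          apply orderOf_dvd_of_pow_eq_one
          rw [← hn]; exact hK
        have hord2 : orderOf ((k : ZMod p)) ∣ p - 1 := by
          apply orderOf_dvd_of_pow_eq_one
          exact ZMod.pow_card_sub_one_eq_one hKne
        have hcop : Nat.Coprime (p ^ n) (p - 1) := by
          apply Nat.Coprime.pow_left
          refine (Nat.Prime.coprime_iff_not_dvd hp).mpr ?_
          intro hdvd
          have hp2 := hp.two_le
          have h1 : p - 1 ≠ 0 := by omega
          have h2 := Nat.le_of_dvd (Nat.pos_of_ne_zero h1) hdvd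
          omega
        have hordone : orderOf ((k : ZMod p)) = 1 := by
          have h := Nat.dvd_gcd hord1 hord2
          have hg : Nat.gcd (p ^ n) (p - 1) = 1 := hcop
          rw [hg] at h
          exact Nat.dvd_one.mp h
        have hK1 : (k : ZMod p) = 1 := orderOf_eq_one_iff.mp hordone
        have hdvd2 : ((p : ℤ)) ∣ (k - 1) := by
          have h0 : ((k - 1 : ℤ) : ZMod p) = 0 := by
            push_cast
            rw [hK1, sub_self]
          exact (ZMod.intCast_zmod_eq_zero_iff_dvd _ p).mp h0
        have hsmul0 : (k - 1 : ℤ) • q = 0 := by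
          apply addOrderOf_dvd_iff_zsmul_eq_zero.mp
          rwa [hord]
        calc f q = (k : ℤ) • q := hk.symm
          _ = (k - 1 : ℤ) • q + (1 : ℤ) • q := by rw [← add_zsmul]; ring_nf
          _ = q := by rw [hsmul0, one_zsmul, zero_add]
    -- conclude
    have heq : π (Br.lam b x) = π x := by rw [hcomm]; exact hfid (π x)
    have hsub : Br.lam b x - x ∈ B' := (QuotientAddGroup.eq_iff_sub_mem).mp heq
    exact hsub
  -- Step B: `λ_a(B) = B` for every `a`
  intro a b hb
  have hBsub : B ⊆ Br.lam a '' B := by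
    intro β hβ
    -- pull back by conjugation
    have hcB : (toG Br).symm ((toG Br a)⁻¹ * toG Br β * ((toG Br a)⁻¹)⁻¹) ∈ B := by
      have h := hnormal.conj_mem (toG Br β) ((hmemS β).mpr hβ) ((toG Br a)⁻¹)
      have h2 : toG Br ((toG Br).symm ((toG Br a)⁻¹ * toG Br β * ((toG Br a)⁻¹)⁻¹)) ∈ S := by
        rw [Equiv.apply_symm_apply]; exact h
      exact (hmemS _).mp h2
    set c : A := (toG Br).symm ((toG Br a)⁻¹ * toG Br β * ((toG Br a)⁻¹)⁻¹) with hc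
    have hconj : toG Br (Br.circ (Br.circ a c) (Br.inv a)) = toG Br β := by
      rw [toG_mul, toG_mul, toG_inv, hc, Equiv.apply_symm_apply]
      group
    have hconj' : Br.circ (Br.circ a c) (Br.inv a) = β := (toG Br).injective hconj
    have hkey : Br.circ (Br.circ a c) (Br.inv a) =
        Br.lam a (c + (Br.lam c (Br.inv a) - Br.inv a)) := conj_eq Br a c
    have hcc : c + (Br.lam c (Br.inv a) - Br.inv a) ∈ B :=
      hadd _ hcB _ (stepA c hcB (Br.inv a))
    exact ⟨_, hcc, by rw [← hkey, hconj']⟩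
  have himg : Br.lam a '' B = B := by
    have hfin : (Br.lam a '' B).Finite := Set.toFinite _
    have hcardle : (Br.lam a '' B).ncard ≤ B.ncard := by
      rw [Set.ncard_image_of_injective B (lam_injective Br a)]
    exact (Set.eq_of_subset_of_ncard_le hBsub hcardle hfin).symm
  rw [← himg]
  exact ⟨b, hb, rfl⟩
end

section
/- Let p be a prime and A a finite brace with more than one element whose cardinality is a power of p. Then Fix(A) ≠ {0}, i.e. there exists a nonzero a ∈ A with λ_b(a) = a for all b ∈ A. Moreover, if the group (A,∘) is abelian, then Soc(A) ≠ {0}, i.e. there exists a nonzero a ∈ A with a∘b = a + b for all b ∈ A. -/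
section Aux

variable {A : Type*} [AddCommGroup A] (Br : Brace A)

lemma Brace.circ_neg (a b : A) : Br.circ a (-b) = a - Br.circ a b + a := by
  have h := Br.circ_add a b (-b)
  rw [add_neg_cancel, Br.circ_zero] at h
  have : Br.circ a b - a + Br.circ a (-b) = Br.circ a b - a + (a - Br.circ a b + a) := by
    rw [← h]; abel
  exact add_left_cancel this

lemma Brace.lam_circ (a b c : A) :
    Br.lam (Br.circ a b) c = Br.lam a (Br.lam b c) := by
  unfold Brace.lam
  rw [Br.circ_add, Br.circ_neg, Br.circ_assoc]
  abel

lemma Brace.lam_zero' (b : A) : Br.lam 0 b = b := by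
  simp [Brace.lam, Br.zero_circ]

lemma Brace.zero_mem_fix (a : A) : Br.lam a 0 = 0 := by
  simp [Brace.lam, Br.circ_zero]

/-- Type synonym carrying the multiplicative group `(A, ∘)`. -/
def BraceGrp {A : Type*} [AddCommGroup A] (_Br : Brace A) : Type _ := A

instance {A : Type*} [AddCommGroup A] (Br : Brace A) : Group (BraceGrp Br) where
  mul a b := Br.circ a b
  one := (0 : A)
  inv := Br.inv
  mul_assoc := Br.circ_assoc
  one_mul := Br.zero_circ
  mul_one := Br.circ_zero
  inv_mul_cancel := Br.inv_circ

instance {A : Type*} [AddCommGroup A] [Fintype A] (Br : Brace A) :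
    Fintype (BraceGrp Br) := inferInstanceAs (Fintype A)

instance braceAction {A : Type*} [AddCommGroup A] (Br : Brace A) :
    MulAction (BraceGrp Br) A where
  smul a b := Br.lam a b
  one_smul := Br.lam_zero'
  mul_smul := Br.lam_circ

lemma braceAction_smul_def (a : BraceGrp Br) (b : A) :
    a • b = Br.lam a b := rfl

end Aux

theorem stmt4 {p : ℕ} (hp : p.Prime) {A : Type*} [AddCommGroup A] [Fintype A]
    [Nontrivial A] (Br : Brace A) (hcard : ∃ n : ℕ, Fintype.card A = p ^ n) :
    (∃ a : A, a ≠ 0 ∧ ∀ b : A, Br.lam b a = a) ∧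
    ((∀ a b : A, Br.circ a b = Br.circ b a) →
      ∃ a : A, a ≠ 0 ∧ ∀ b : A, Br.circ a b = a + b) := by
  haveI : Fact p.Prime := ⟨hp⟩
  obtain ⟨n, hn⟩ := hcard
  have hG : IsPGroup p (BraceGrp Br) := by
    apply IsPGroup.of_card (n := n)
    rw [Nat.card_eq_fintype_card]
    exact hn
  have hmod := hG.card_modEq_card_fixedPoints A
  -- p divides card A
  have hn0 : n ≠ 0 := by
    intro h
    rw [h, pow_zero] at hn
    exact (Fintype.one_lt_card).ne' hn
  have hpA : p ∣ Fintype.card A := hn ▸ dvd_pow_self p hn0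
  have hfix : p ∣ Nat.card (MulAction.fixedPoints (BraceGrp Br) A) := by
    have : Nat.card A ≡ 0 [MOD p] := by
      rw [Nat.card_eq_fintype_card]
      exact (Nat.modEq_zero_iff_dvd).2 hpA
    exact (Nat.modEq_zero_iff_dvd).1 (hmod.symm.trans this)
  have h0 : (0 : A) ∈ MulAction.fixedPoints (BraceGrp Br) A := by
    intro b; exact Br.zero_mem_fix b
  haveI : Finite (MulAction.fixedPoints (BraceGrp Br) A) := Subtype.finite
  haveI : Nonempty (MulAction.fixedPoints (BraceGrp Br) A) := ⟨⟨0, h0⟩⟩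
  have hpos : 0 < Nat.card (MulAction.fixedPoints (BraceGrp Br) A) := Nat.card_pos
  have h2 : 1 < Nat.card (MulAction.fixedPoints (BraceGrp Br) A) := by
    rcases hfix with ⟨k, hk⟩
    have hk0 : k ≠ 0 := by rintro rfl; simp [hk] at hpos
    calc 1 < p := hp.one_lt
    _ ≤ p * k := Nat.le_mul_of_pos_right p (Nat.pos_of_ne_zero hk0)
    _ = _ := hk.symm
  haveI := Fintype.ofFinite (MulAction.fixedPoints (BraceGrp Br) A)
  rw [Nat.card_eq_fintype_card] at h2
  obtain ⟨x, hx⟩ := Fintype.exists_ne_of_one_lt_card h2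
      (⟨0, h0⟩ : MulAction.fixedPoints (BraceGrp Br) A)
  have hx0 : (x : A) ≠ 0 := fun h => hx (Subtype.ext h)
  have hxfix : ∀ b : A, Br.lam b (x : A) = (x : A) := fun b => x.2 b
  refine ⟨⟨x, hx0, hxfix⟩, fun hcomm => ⟨x, hx0, fun b => ?_⟩⟩
  have : Br.circ b (x : A) = b + (x : A) := by
    have h := hxfix b
    unfold Brace.lam at h
    simpa using congrArg (b + ·) h
  rw [hcomm, this]; abel
end

section
/- Let p be a prime, X a finite set with |X| = p², and G ≤ Sym(X) a non-abelian p-group acting transitively on X. Then G admits at most one non-trivial system of imprimitivity; equivalently, if B and C are blocks for the action of G (i.e. for every g ∈ G, g·B = B or g·B ∩ B = ∅, and likewise for C) with 1 < |B| < p², 1 < |C| < p², and B ∩ C ≠ ∅, then B = C. -/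
open MulAction Subgroup Pointwise

section Aux

variable {p : ℕ} {X : Type*} [Fintype X] (G : Subgroup (Equiv.Perm X))

lemma block_aux (hp : p.Prime) (hX : Fintype.card X = p ^ 2)
    [MulAction.IsPretransitive ↥G X]
    (x : X) (B : Set X) (hxB : x ∈ B)
    (hB : ∀ g : ↥G, g • B = B ∨ Disjoint (g • B) B)
    (hBcard : 1 < B.ncard ∧ B.ncard < p ^ 2) :
    MulAction.stabilizer ↥G x ≤ MulAction.stabilizer ↥G B ∧
    (MulAction.stabilizer ↥G B).index = p ∧
    B = {y : X | ∃ g ∈ MulAction.stabilizer ↥G B, g • x = y} := by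
  classical
  set S := MulAction.stabilizer ↥G x with hS
  set K := MulAction.stabilizer ↥G B with hK
  have hSK : S ≤ K := by
    intro g hg
    have hgx : g • x = x := hg
    rcases hB g with h | h
    · exact h
    · exact absurd h (by
        rw [Set.not_disjoint_iff]
        exact ⟨x, by rw [← hgx]; exact Set.smul_mem_smul_set hxB, hxB⟩)
  have horb : B = {y : X | ∃ g ∈ K, g • x = y} := by
    ext y
    constructor
    · intro hy
      obtain ⟨g, hgx⟩ := MulAction.exists_smul_eq ↥G x y
      refine ⟨g, ?_, hgx⟩
      rcases hB g with h | h
      · exact h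
      · exact absurd h (by
          rw [Set.not_disjoint_iff]
          exact ⟨y, by rw [← hgx]; exact Set.smul_mem_smul_set hxB, hy⟩)
    · rintro ⟨g, hgK, rfl⟩
      have : g • B = B := hgK
      rw [← this]
      exact Set.smul_mem_smul_set hxB
  -- B equals the orbit of x under ↥K
  have horbit : MulAction.orbit ↥K x = B := by
    rw [horb]
    ext y
    constructor
    · rintro ⟨⟨g, hg⟩, rfl⟩
      exact ⟨g, hg, rfl⟩
    · rintro ⟨g, hg, rfl⟩
      exact ⟨⟨g, hg⟩, rfl⟩
  -- relate stabilizers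
  have hstab : MulAction.stabilizer ↥K x = S.subgroupOf K := by
    ext k
    simp [Subgroup.mem_subgroupOf, MulAction.mem_stabilizer_iff, hS, Subgroup.smul_def]
  have hcardB : S.relIndex K = B.ncard := by
    rw [Subgroup.relIndex, ← hstab, MulAction.index_stabilizer, horbit]
  have hSindex : S.index = p ^ 2 := by
    rw [hS, MulAction.index_stabilizer_of_transitive, Nat.card_eq_fintype_card, hX]
  have hmul : B.ncard * K.index = p ^ 2 := by
    rw [← hcardB, ← hSindex]
    exact Subgroup.relIndex_mul_index hSK
  have hBdvd : B.ncard ∣ p ^ 2 := ⟨K.index, hmul.symm⟩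
  obtain ⟨i, hi, hBi⟩ := (Nat.dvd_prime_pow hp).mp hBdvd
  interval_cases i
  · rw [pow_zero] at hBi; omega
  · have hBp : B.ncard = p := by simpa using hBi
    have hKindex : K.index = p := by
      have hp0 : p ≠ 0 := hp.ne_zero
      have h2 : p * K.index = p * p := by rw [← pow_two, ← hmul, hBp]
      exact Nat.eq_of_mul_eq_mul_left (Nat.pos_of_ne_zero hp0) h2
    exact ⟨hSK, hKindex, horb⟩
  · rw [hBi] at hBcard; omega

end Aux

theorem stmt5 {p : ℕ} (hp : p.Prime) {X : Type*} [Fintype X]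
    (hX : Fintype.card X = p ^ 2)
    (G : Subgroup (Equiv.Perm X)) (hpG : IsPGroup p G)
    (hnonab : ¬ ∀ g ∈ G, ∀ h ∈ G, g * h = h * g)
    (htrans : ∀ x y : X, ∃ g ∈ G, g x = y)
    (B C : Set X)
    (hB : ∀ g ∈ G, (⇑g) '' B = B ∨ Disjoint ((⇑g) '' B) B)
    (hC : ∀ g ∈ G, (⇑g) '' C = C ∨ Disjoint ((⇑g) '' C) C)
    (hBcard : 1 < B.ncard ∧ B.ncard < p ^ 2)
    (hCcard : 1 < C.ncard ∧ C.ncard < p ^ 2)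
    (hint : (B ∩ C).Nonempty) :
    B = C := by
  classical
  haveI : Fact p.Prime := ⟨hp⟩
  obtain ⟨x, hxB, hxC⟩ := hint
  haveI : MulAction.IsPretransitive ↥G X := by
    constructor
    intro a b
    obtain ⟨g, hg, hgab⟩ := htrans a b
    exact ⟨⟨g, hg⟩, hgab⟩
  have hsmul : ∀ (g : ↥G) (A : Set X), g • A = ⇑(g : Equiv.Perm X) '' A := by
    intro g A
    rw [← Set.image_smul]
    rfl
  have hB' : ∀ g : ↥G, g • B = B ∨ Disjoint (g • B) B := by
    intro g; rw [hsmul]; exact hB g g.2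
  have hC' : ∀ g : ↥G, g • C = C ∨ Disjoint (g • C) C := by
    intro g; rw [hsmul]; exact hC g g.2
  obtain ⟨hSKb, hKbidx, hBorb⟩ := block_aux G hp hX x B hxB hB' hBcard
  obtain ⟨hSKc, hKcidx, hCorb⟩ := block_aux G hp hX x C hxC hC' hCcard
  set S := MulAction.stabilizer ↥G x with hSdef
  set Kb := MulAction.stabilizer ↥G B with hKbdef
  set Kc := MulAction.stabilizer ↥G C with hKcdef
  by_cases hKeq : Kb = Kc
  · rw [hBorb, hCorb, hKeq]
  · exfalso
    have hp0 : p ≠ 0 := hp.ne_zero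
    have hppos : 0 < p := hp.pos
    -- helper: subgroups related by ≤ with equal index p are equal
    have heq_of_le : ∀ (H K' : Subgroup ↥G), H ≤ K' → H.index = K'.index →
        H.index ≠ 0 → H = K' := by
      intro H K' hle hidx hne
      have := Subgroup.relIndex_mul_index hle
      rw [hidx] at this
      have h1 : H.relIndex K' = 1 := by
        have : H.relIndex K' * K'.index = 1 * K'.index := by rw [this, one_mul]
        exact Nat.eq_of_mul_eq_mul_right (by omega) this
      exact le_antisymm hle (Subgroup.relIndex_eq_one.mp h1)
    -- the intersection N
    set N := Kb ⊓ Kc with hNdef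
    have hSN : S ≤ N := le_inf hSKb hSKc
    have hSindex : S.index = p ^ 2 := by
      rw [hSdef, MulAction.index_stabilizer_of_transitive, Nat.card_eq_fintype_card, hX]
    have hNdvd : N.index ∣ p ^ 2 := hSindex ▸ Subgroup.index_dvd_of_le hSN
    have hpdvdN : p ∣ N.index := hKbidx ▸ Subgroup.index_dvd_of_le inf_le_left
    obtain ⟨i, hi, hNi⟩ := (Nat.dvd_prime_pow hp).mp hNdvd
    have hNne : N.index ≠ p := by
      intro hNp
      have hNKb : N = Kb := heq_of_le N Kb inf_le_left (by rw [hNp, hKbidx]) (by rw [hNp]; exact hp0)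
      have hKbKc : Kb ≤ Kc := hNKb ▸ inf_le_right
      exact hKeq (heq_of_le Kb Kc hKbKc (by rw [hKbidx, hKcidx]) (by rw [hKbidx]; exact hp0))
    have hNidx : N.index = p ^ 2 := by
      interval_cases i
      · simp only [pow_zero] at hNi
        rw [hNi] at hpdvdN
        have h1 := Nat.le_of_dvd (by omega) hpdvdN
        have h2 := hp.one_lt
        omega
      · exact absurd (hNi.trans (pow_one p)) hNne
      · exact hNi
    have hSNeq : S = N := heq_of_le S N hSN (by rw [hSindex, hNidx]) (by rw [hSindex]; positivity)
    -- Kb and Kc are normal (index p in a p-group)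
    have hfin : Finite ↥G := inferInstance
    have hnil : Group.IsNilpotent ↥G := hpG.isNilpotent
    have hnc : NormalizerCondition ↥G := normalizerCondition_of_isNilpotent
    have hcoatom : ∀ K' : Subgroup ↥G, K'.index = p → IsCoatom K' := by
      intro K' hKidx
      constructor
      · intro htop
        rw [htop, Subgroup.index_top] at hKidx
        have := hp.one_lt
        omega
      · intro K'' hlt
        have hdvd : K''.index ∣ p := hKidx ▸ Subgroup.index_dvd_of_le hlt.le
        rcases (Nat.Prime.eq_one_or_self_of_dvd hp _ hdvd) with h1 | hpp
        · exact Subgroup.index_eq_one.mp h1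
        · exact absurd (heq_of_le K' K'' hlt.le (by rw [hKidx, hpp]) (by rw [hKidx]; exact hp0))
            hlt.ne
    haveI hKbn : Kb.Normal := Subgroup.NormalizerCondition.normal_of_coatom Kb hnc (hcoatom Kb hKbidx)
    haveI hKcn : Kc.Normal := Subgroup.NormalizerCondition.normal_of_coatom Kc hnc (hcoatom Kc hKcidx)
    haveI hNn : N.Normal := Subgroup.normal_inf_normal Kb Kc
    have hSnormal : S.Normal := hSNeq ▸ hNn
    -- S is trivial since the action is faithful and transitive
    have hSbot : S = ⊥ := by
      rw [eq_bot_iff]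
      intro s hs
      have hfix : ∀ y : X, s • y = y := by
        intro y
        obtain ⟨g, hgx⟩ := MulAction.exists_smul_eq ↥G x y
        have hmem : g⁻¹ * s * g ∈ S := hSnormal.conj_mem' s hs g
        have hx : (g⁻¹ * s * g) • x = x := hmem
        calc s • y = s • (g • x) := by rw [hgx]
          _ = (g * (g⁻¹ * s * g)) • x := by
                rw [show g * (g⁻¹ * s * g) = s * g by group, mul_smul]
          _ = g • x := by rw [mul_smul, hx]
          _ = y := hgx
      have hs1 : (s : Equiv.Perm X) = 1 := Equiv.ext fun y => hfix y
      rw [Subgroup.mem_bot]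
      exact Subtype.ext hs1
    have hcard : Nat.card ↥G = p ^ 2 := by
      rw [← Subgroup.index_bot, ← hSbot, hSindex]
    have hcomm := IsPGroup.commutative_of_card_eq_prime_sq hcard
    apply hnonab
    intro g hg h hh
    have := hcomm ⟨g, hg⟩ ⟨h, hh⟩
    exact Subtype.ext_iff.mp this
end

section
/- Let m ≥ 2 be an integer, A an abelian group generated by the image of a non-constant map Φ : ℤ_m → A with Φ(0) = 0, and let S ∈ A. Then the operation (a,x)·(b,y) = (b+1, y + χ₀(b)·S + Φ(b−a)) on X = ℤ_m × A defines an indecomposable cycle set. Moreover, given a second such datum (B, Φ′ : ℤ_m → B non-constant with Φ′(0)=0 and B generated by the image of Φ′, S′ ∈ B), the two resulting cycle sets are isomorphic if and only if there exists a group isomorphism f : A → B with Φ′ = f∘Φ and f(S) = S′. -/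
/-- A (non-degenerate) cycle set: a set with a binary operation satisfying
(C1) `(x·y)·(x·z) = (y·x)·(y·z)`, (C2) each left translation is bijective and
(C3) the square map `x ↦ x·x` is bijective. -/
structure CycleSet (X : Type*) where
  op : X → X → X
  c1 : ∀ x y z : X, op (op x y) (op x z) = op (op y x) (op y z)
  c2 : ∀ x : X, Function.Bijective (op x)
  c3 : Function.Bijective (fun x : X => op x x)

namespace CycleSet

variable {X Y : Type*}

/-- The permutation `σ_x : y ↦ x·y`. -/
noncomputable def sigma (C : CycleSet X) (x : X) : Equiv.Perm X :=
  Equiv.ofBijective (C.op x) (C.c2 x)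

/-- The permutation group `𝒢(X)` generated by all `σ_x`. -/
noncomputable def permGroup (C : CycleSet X) : Subgroup (Equiv.Perm X) :=
  Subgroup.closure (Set.range C.sigma)

/-- A cycle set is indecomposable if `𝒢(X)` acts transitively on `X`. -/
def Indecomposable (C : CycleSet X) : Prop :=
  ∀ x y : X, ∃ g ∈ C.permGroup, g x = y

/-- A cycle set is irretractable if `σ_x = σ_y` implies `x = y`. -/
def Irretractable (C : CycleSet X) : Prop :=
  ∀ x y : X, C.op x = C.op y → x = y

/-- `f` is an isomorphism of cycle sets from `C` to `D`. -/
def IsIso (C : CycleSet X) (D : CycleSet Y) (f : X → Y) : Prop :=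
  Function.Bijective f ∧ ∀ x y : X, f (C.op x y) = D.op (f x) (f y)

/-- Two cycle sets are isomorphic if there is an isomorphism between them. -/
def Iso (C : CycleSet X) (D : CycleSet Y) : Prop :=
  ∃ f : X → Y, C.IsIso D f

end CycleSet

/-
Every `σ_p` maps the fibre `{b} × A` to `{b + 1} × A`, and `(c, w + Φ t)` is the product
`(c - 1 - t, 0)·(c - 1, w - χ₀(c - 1) S)`, whose right factor does not depend on `t`. So anything
that only sees the right factor of a product (a `𝒢(X)`-orbit, or the first coordinate of an
isomorphism `F`) is invariant under translation by the `Φ t`, hence by all of `A`. This gives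
transitivity, and it forces an isomorphism to have the form `F (c, w) = (c + k, u c + f w)` with
`f : A ≃+ B` extending `Φ ↦ Φ'`. Summing the remaining relation
`u (b + 1) + f (χ₀(b) S) = u b + χ₀(b + k) S'` over `ℤ_m` gives `f S = S'`.
-/

theorem AddSubgroup.apply_eq_apply_zero_of_closure_eq_top {G β : Type*} [AddGroup G] {s : Set G}
    (hs : AddSubgroup.closure s = ⊤) {g : G → β} (hg : ∀ w, ∀ t ∈ s, g (w + t) = g w) (w : G) :
    g w = g 0 := by
  suffices ∀ d ∈ AddSubgroup.closure s, ∀ w, g (w + d) = g w by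
    simpa using this w (hs ▸ AddSubgroup.mem_top w) 0
  intro d hd
  induction hd using AddSubgroup.closure_induction with
  | mem t ht => exact fun w => hg w t ht
  | zero => simp
  | add d e _ _ hd he => exact fun w => by rw [← add_assoc, he, hd]
  | neg d _ hd => exact fun w => by rw [← hd (w + -d), neg_add_cancel_right]

theorem ZMod.closure_one_eq_top (m : ℕ) : AddSubgroup.closure {(1 : ZMod m)} = ⊤ := by
  rw [← AddSubgroup.zmultiples_eq_closure, eq_top_iff]
  rintro x -
  obtain ⟨k, rfl⟩ := ZMod.intCast_surjective x
  exact AddSubgroup.intCast_mem_zmultiples_one k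

theorem ZMod.sum_eq_sum_of_add_one {m : ℕ} [NeZero m] {B : Type*} [AddCommGroup B]
    {u g h : ZMod m → B} (hu : ∀ b, u (b + 1) + g b = u b + h b) :
    ∑ b, g b = ∑ b, h b := by
  have hshift : ∑ b, u (b + 1) = ∑ b, u b := Equiv.sum_comp (Equiv.addRight 1) u
  have := Finset.sum_congr rfl fun b (_ : b ∈ Finset.univ) => hu b
  rwa [Finset.sum_add_distrib, Finset.sum_add_distrib, hshift, add_right_inj] at this

namespace CycleSet

variable {X : Type*}

theorem orbit_op (C : CycleSet X) (p q : X) :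
    MulAction.orbit C.permGroup (C.op p q) = MulAction.orbit C.permGroup q :=
  MulAction.orbit_smul (α := X) (⟨C.sigma p, Subgroup.subset_closure ⟨p, rfl⟩⟩ : C.permGroup) q

theorem indecomposable_of_orbit_eq (C : CycleSet X)
    (h : ∀ x y : X, MulAction.orbit C.permGroup x = MulAction.orbit C.permGroup y) :
    C.Indecomposable := by
  intro x y
  obtain ⟨g, hg⟩ := MulAction.mem_orbit_iff.1 (h x y ▸ MulAction.mem_orbit_self y)
  exact ⟨g, g.2, hg⟩

end CycleSet

section Construction

variable {m : ℕ} {A : Type*} [AddCommGroup A]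

def cycOp (Φ : ZMod m → A) (S : A) (p q : ZMod m × A) : ZMod m × A :=
  (q.1 + 1, q.2 + (if q.1 = 0 then S else 0) + Φ (q.1 - p.1))

variable (Φ : ZMod m → A) (S : A)

theorem cycOp_pred (c t : ZMod m) (w x : A) :
    cycOp Φ S (c - 1 - t, x) (c - 1, w - if c - 1 = 0 then S else 0) = (c, w + Φ t) := by
  simp [cycOp]

theorem cycOp_right_injective (p : ZMod m × A) : Function.Injective (cycOp Φ S p) := by
  rintro ⟨b, y⟩ ⟨b', y'⟩ h
  simp only [cycOp, Prod.mk.injEq, add_left_inj] at h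
  obtain ⟨rfl, h⟩ := h
  rw [add_left_inj, add_left_inj] at h
  rw [h]

theorem cycOp_bijective (p : ZMod m × A) : Function.Bijective (cycOp Φ S p) := by
  refine ⟨cycOp_right_injective Φ S p, fun ⟨c, w⟩ => ?_⟩
  refine ⟨(c - 1, (w - Φ (c - 1 - p.1)) - if c - 1 = 0 then S else 0), ?_⟩
  simpa [sub_sub_cancel] using cycOp_pred Φ S c (c - 1 - p.1) (w - Φ (c - 1 - p.1)) p.2

theorem cycOp_square_bijective : Function.Bijective (fun p : ZMod m × A => cycOp Φ S p p) := by
  refine ⟨fun ⟨a, x⟩ ⟨a', x'⟩ h => ?_, fun ⟨c, w⟩ => ?_⟩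
  · simp only [cycOp, Prod.mk.injEq, sub_self, add_left_inj] at h
    obtain ⟨rfl, h⟩ := h
    simp_all
  · refine ⟨(c - 1, (w - Φ 0) - if c - 1 = 0 then S else 0), ?_⟩
    simpa using cycOp_pred Φ S c 0 (w - Φ 0) ((w - Φ 0) - if c - 1 = 0 then S else 0)

theorem cycOp_cycloid (p q r : ZMod m × A) :
    cycOp Φ S (cycOp Φ S p q) (cycOp Φ S p r) = cycOp Φ S (cycOp Φ S q p) (cycOp Φ S q r) := by
  simp only [cycOp, add_sub_add_right_eq_sub, Prod.mk.injEq, true_and]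
  ac_rfl

def cycleSetOf : CycleSet (ZMod m × A) where
  op := cycOp Φ S
  c1 := cycOp_cycloid Φ S
  c2 := cycOp_bijective Φ S
  c3 := cycOp_square_bijective Φ S

end Construction

section Fibres

variable {m : ℕ} {A : Type*} [AddCommGroup A] {Φ : ZMod m → A} {S : A}

theorem cycOp_pred_of_map_zero (hΦ0 : Φ 0 = 0) (c : ZMod m) (w x : A) :
    cycOp Φ S (c - 1, x) (c - 1, w - if c - 1 = 0 then S else 0) = (c, w) := by
  simpa [hΦ0] using cycOp_pred Φ S c 0 w x

theorem op_eq_cycOp {C : CycleSet (ZMod m × A)}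
    (hC : ∀ (a b : ZMod m) (x y : A),
      C.op (a, x) (b, y) = (b + 1, y + (if b = 0 then S else 0) + Φ (b - a))) :
    C.op = cycOp Φ S :=
  funext fun ⟨a, x⟩ => funext fun ⟨b, y⟩ => hC a b x y

theorem apply_eq_apply_zero_of_cycOp {β : Type*} (hΦ0 : Φ 0 = 0)
    (hgen : AddSubgroup.closure (Set.range Φ) = ⊤) {G H : ZMod m × A → β}
    (hG : ∀ p q, G (cycOp Φ S p q) = H q) (c : ZMod m) (w : A) : G (c, w) = G (c, 0) :=
  AddSubgroup.apply_eq_apply_zero_of_closure_eq_top hgen (g := fun w => G (c, w))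
    (fun w => Set.forall_mem_range.2 fun t => by
      rw [← cycOp_pred Φ S c t w 0, hG, ← hG (c - 1, 0), cycOp_pred_of_map_zero hΦ0]) w

theorem indecomposable_of_op_eq_cycOp (hΦ0 : Φ 0 = 0)
    (hgen : AddSubgroup.closure (Set.range Φ) = ⊤) (C : CycleSet (ZMod m × A))
    (hC : C.op = cycOp Φ S) : C.Indecomposable := by
  have horbit p q : MulAction.orbit C.permGroup (cycOp Φ S p q) = MulAction.orbit C.permGroup q :=
    hC ▸ C.orbit_op p q
  have hfibre := apply_eq_apply_zero_of_cycOp hΦ0 hgen horbit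
  have hbase := AddSubgroup.apply_eq_apply_zero_of_closure_eq_top (ZMod.closure_one_eq_top m)
    (g := fun c => MulAction.orbit C.permGroup (c, (0 : A))) (by
      rintro c _ rfl
      rw [← horbit (c, 0) (c, 0)]
      exact (hfibre (c + 1) _).symm)
  exact C.indecomposable_of_orbit_eq fun ⟨a, x⟩ ⟨b, y⟩ => by
    rw [hfibre a, hfibre b, hbase a, hbase b]

end Fibres

theorem Function.Bijective.of_prod_mk {Γ Γ' α β : Type*} [AddGroup β] {F : Γ × α → Γ' × β}
    {σ : Γ → Γ'} {u : Γ → β} {f : α → β} (hF : Function.Bijective F)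
    (hσ : Function.Injective σ) (hform : ∀ c w, F (c, w) = (σ c, u c + f w)) (c : Γ) :
    Function.Bijective f := by
  refine ⟨fun w w' h => ?_, fun v => ?_⟩
  · have := hF.1 (by rw [hform, hform, h] : F (c, w) = F (c, w'))
    exact (Prod.mk.inj this).2
  · obtain ⟨⟨c', w⟩, h⟩ := hF.2 (σ c, u c + v)
    rw [hform, Prod.mk.injEq] at h
    obtain rfl := hσ h.1
    exact ⟨w, add_left_cancel h.2⟩

section Isomorphisms

variable {m : ℕ} {A B : Type*} [AddCommGroup A] [AddCommGroup B]
  {Φ : ZMod m → A} {S : A} {Φ' : ZMod m → B} {S' : B}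

theorem map_cycOp_prodMap (f : A ≃+ B) (hfΦ : ∀ i, Φ' i = f (Φ i)) (hfS : f S = S')
    (p q : ZMod m × A) :
    Prod.map id f (cycOp Φ S p q) = cycOp Φ' S' (Prod.map id f p) (Prod.map id f q) := by
  simp [cycOp, hfΦ, apply_ite f, hfS]

section Map

variable {F : ZMod m × A → ZMod m × B} (hF : ∀ p q, F (cycOp Φ S p q) = cycOp Φ' S' (F p) (F q))
include hF

theorem fst_map_eq (hΦ0 : Φ 0 = 0) (hgen : AddSubgroup.closure (Set.range Φ) = ⊤)
    (c : ZMod m) (w : A) : (F (c, w)).1 = c + (F (0, 0)).1 := by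
  have hfst p q : (F (cycOp Φ S p q)).1 = (F q).1 + 1 := by rw [hF]; rfl
  have hfibre := apply_eq_apply_zero_of_cycOp hΦ0 hgen (G := fun q => (F q).1) hfst
  have hsucc := AddSubgroup.apply_eq_apply_zero_of_closure_eq_top (ZMod.closure_one_eq_top m)
    (g := fun c => (F (c, 0)).1 - c) (by
      rintro c _ rfl
      rw [← hfibre (c + 1) (cycOp Φ S (c, 0) (c, 0)).2]
      change (F (cycOp Φ S (c, 0) (c, 0))).1 - (c + 1) = (F (c, 0)).1 - c
      rw [hfst]
      abel)
  rw [hfibre, ← sub_eq_iff_eq_add', hsucc c, sub_zero]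

theorem snd_map_cycOp (hΦ0 : Φ 0 = 0) (hgen : AddSubgroup.closure (Set.range Φ) = ⊤)
    (p q : ZMod m × A) :
    (F (cycOp Φ S p q)).2 =
      (F q).2 + (if q.1 + (F (0, 0)).1 = 0 then S' else 0) + Φ' (q.1 - p.1) := by
  rw [hF, cycOp, fst_map_eq hF hΦ0 hgen q.1, fst_map_eq hF hΦ0 hgen p.1,
    add_sub_add_right_eq_sub]

theorem snd_map_add_apply (hΦ0 : Φ 0 = 0) (hΦ'0 : Φ' 0 = 0)
    (hgen : AddSubgroup.closure (Set.range Φ) = ⊤) (c t : ZMod m) (w : A) :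
    (F (c, w + Φ t)).2 = (F (c, w)).2 + Φ' t := by
  rw [← cycOp_pred Φ S c t w 0, ← cycOp_pred_of_map_zero hΦ0 c w 0,
    snd_map_cycOp hF hΦ0 hgen, snd_map_cycOp hF hΦ0 hgen]
  simp [hΦ'0]

theorem exists_addMonoidHom_snd_map (hΦ0 : Φ 0 = 0) (hΦ'0 : Φ' 0 = 0)
    (hgen : AddSubgroup.closure (Set.range Φ) = ⊤) :
    ∃ f : A →+ B, (∀ t, f (Φ t) = Φ' t) ∧ ∀ c w, (F (c, w)).2 = (F (c, 0)).2 + f w := by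
  have hshift := snd_map_add_apply hF hΦ0 hΦ'0 hgen
  have hadd c w d : (F (c, w + d)).2 = (F (c, w)).2 + ((F (c, d)).2 - (F (c, 0)).2) := by
    have := AddSubgroup.apply_eq_apply_zero_of_closure_eq_top hgen
      (g := fun w => (F (c, w + d)).2 - (F (c, w)).2) (fun w => Set.forall_mem_range.2 fun t => by
        rw [add_right_comm, hshift, hshift]
        abel) w
    simp only [zero_add] at this
    rw [← this]
    abel
  let f c : A →+ B :=
    AddMonoidHom.mk' (fun d => (F (c, d)).2 - (F (c, 0)).2) fun w d => by rw [hadd]; abel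
  have hfΦ c t : f c (Φ t) = Φ' t := by
    rw [AddMonoidHom.mk'_apply, sub_eq_iff_eq_add']
    simpa using hshift c t 0
  refine ⟨f 0, hfΦ 0, fun c w => ?_⟩
  have : f c = f 0 := AddMonoidHom.eq_of_eqOn_dense hgen
    (Set.forall_mem_range.2 fun t => by rw [hfΦ, hfΦ])
  rw [← this]
  simp [f]

theorem exists_addEquiv_of_map_cycOp [NeZero m] (hΦ0 : Φ 0 = 0) (hΦ'0 : Φ' 0 = 0)
    (hgen : AddSubgroup.closure (Set.range Φ) = ⊤) (hFbij : Function.Bijective F) :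
    ∃ f : A ≃+ B, (∀ i, Φ' i = f (Φ i)) ∧ f S = S' := by
  obtain ⟨f, hfΦ, hf⟩ := exists_addMonoidHom_snd_map hF hΦ0 hΦ'0 hgen
  set k := (F (0, 0)).1
  have hform c w : F (c, w) = (c + k, (F (c, 0)).2 + f w) :=
    Prod.ext (fst_map_eq hF hΦ0 hgen c w) (hf c w)
  have hbij := hFbij.of_prod_mk (add_left_injective k) hform 0
  refine ⟨AddEquiv.ofBijective f hbij, fun i => (hfΦ i).symm, ?_⟩
  have hstep b : (F (b + 1, 0)).2 + f (if b = 0 then S else 0) =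
      (F (b, 0)).2 + (if b + k = 0 then S' else 0) := by
    have := snd_map_cycOp hF hΦ0 hgen (b, 0) (b, 0)
    simp only [cycOp, sub_self, hΦ0, hΦ'0, add_zero, zero_add] at this
    rwa [hf (b + 1)] at this
  simpa [apply_ite f, add_eq_zero_iff_eq_neg] using
    ZMod.sum_eq_sum_of_add_one (u := fun b => (F (b, 0)).2) hstep

end Map

theorem iso_iff_exists_addEquiv [NeZero m] (hΦ0 : Φ 0 = 0) (hΦ'0 : Φ' 0 = 0)
    (hgen : AddSubgroup.closure (Set.range Φ) = ⊤)
    {C : CycleSet (ZMod m × A)} {D : CycleSet (ZMod m × B)}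
    (hC : C.op = cycOp Φ S) (hD : D.op = cycOp Φ' S') :
    C.Iso D ↔ ∃ f : A ≃+ B, (∀ i, Φ' i = f (Φ i)) ∧ f S = S' := by
  constructor
  · rintro ⟨F, hFbij, hF⟩
    rw [hC, hD] at hF
    exact exists_addEquiv_of_map_cycOp hF hΦ0 hΦ'0 hgen hFbij
  · rintro ⟨f, hfΦ, hfS⟩
    refine ⟨Prod.map id f, Function.bijective_id.prodMap f.bijective, ?_⟩
    rw [hC, hD]
    exact map_cycOp_prodMap f hfΦ hfS

end Isomorphisms

theorem stmt7_general {m : ℕ} (hm : 2 ≤ m) {A B : Type*} [AddCommGroup A] [AddCommGroup B]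
    (Φ : ZMod m → A) (hΦ0 : Φ 0 = 0)
    (hgen : AddSubgroup.closure (Set.range Φ) = (⊤ : AddSubgroup A)) (S : A)
    (Φ' : ZMod m → B) (hΦ'0 : Φ' 0 = 0) (S' : B) :
    (∃ C : CycleSet (ZMod m × A),
      (∀ (a b : ZMod m) (x y : A),
        C.op (a, x) (b, y) = (b + 1, y + (if b = 0 then S else 0) + Φ (b - a))) ∧
      C.Indecomposable) ∧
    (∀ (C : CycleSet (ZMod m × A)) (D : CycleSet (ZMod m × B)),
      (∀ (a b : ZMod m) (x y : A),
        C.op (a, x) (b, y) = (b + 1, y + (if b = 0 then S else 0) + Φ (b - a))) →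
      (∀ (a b : ZMod m) (x y : B),
        D.op (a, x) (b, y) = (b + 1, y + (if b = 0 then S' else 0) + Φ' (b - a))) →
      (C.Iso D ↔ ∃ f : A ≃+ B, (∀ i : ZMod m, Φ' i = f (Φ i)) ∧ f S = S')) := by
  have : NeZero m := ⟨by omega⟩
  refine ⟨⟨cycleSetOf Φ S, fun _ _ _ _ => rfl,
    indecomposable_of_op_eq_cycOp hΦ0 hgen _ rfl⟩, fun C D hC hD => ?_⟩
  exact iso_iff_exists_addEquiv hΦ0 hΦ'0 hgen (op_eq_cycOp hC) (op_eq_cycOp hD)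

theorem stmt7 {m : ℕ} (hm : 2 ≤ m) {A B : Type*} [AddCommGroup A] [AddCommGroup B]
    (Φ : ZMod m → A) (hΦ0 : Φ 0 = 0) (hΦnc : ∃ i j : ZMod m, Φ i ≠ Φ j)
    (hgen : AddSubgroup.closure (Set.range Φ) = (⊤ : AddSubgroup A)) (S : A)
    (Φ' : ZMod m → B) (hΦ'0 : Φ' 0 = 0) (hΦ'nc : ∃ i j : ZMod m, Φ' i ≠ Φ' j)
    (hgen' : AddSubgroup.closure (Set.range Φ') = (⊤ : AddSubgroup B)) (S' : B) :
    (∃ C : CycleSet (ZMod m × A),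
      (∀ (a b : ZMod m) (x y : A),
        C.op (a, x) (b, y) = (b + 1, y + (if b = 0 then S else 0) + Φ (b - a))) ∧
      C.Indecomposable) ∧
    (∀ (C : CycleSet (ZMod m × A)) (D : CycleSet (ZMod m × B)),
      (∀ (a b : ZMod m) (x y : A),
        C.op (a, x) (b, y) = (b + 1, y + (if b = 0 then S else 0) + Φ (b - a))) →
      (∀ (a b : ZMod m) (x y : B),
        D.op (a, x) (b, y) = (b + 1, y + (if b = 0 then S' else 0) + Φ' (b - a))) →
      (C.Iso D ↔ ∃ f : A ≃+ B, (∀ i : ZMod m, Φ' i = f (Φ i)) ∧ f S = S')) :=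
  stmt7_general hm Φ hΦ0 hgen S Φ' hΦ'0 S'
end

section
/- Let p be a prime and Φ, Φ′ : ℤ_p → ℤ_p non-constant maps with Φ(A) = Φ(−A) and Φ′(A) = Φ′(−A) for all A ∈ ℤ_p. The cycle sets on ℤ_p × ℤ_p defined by (a,x)·(b,y) = (b+x, y + Φ(b−a)) and (a,x)·′(b,y) = (b+x, y + Φ′(b−a)) are isomorphic if and only if there exists α ∈ ℤ_p ∖ {0} such that Φ(A) = α⁻¹·Φ′(αA) for all A ∈ ℤ_p. -/
theorem stmt10 {p : ℕ} (hp : p.Prime) (Φ Φ' : ZMod p → ZMod p)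
    (hΦnc : ∃ i j : ZMod p, Φ i ≠ Φ j) (hΦev : ∀ A : ZMod p, Φ (-A) = Φ A)
    (hΦ'nc : ∃ i j : ZMod p, Φ' i ≠ Φ' j) (hΦ'ev : ∀ A : ZMod p, Φ' (-A) = Φ' A)
    (C D : CycleSet (ZMod p × ZMod p))
    (hC : ∀ a b x y : ZMod p, C.op (a, x) (b, y) = (b + x, y + Φ (b - a)))
    (hD : ∀ a b x y : ZMod p, D.op (a, x) (b, y) = (b + x, y + Φ' (b - a))) :
    C.Iso D ↔ ∃ α : ZMod p, α ≠ 0 ∧ ∀ A : ZMod p, Φ A = α⁻¹ * Φ' (α * A) := by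
  haveI : Fact p.Prime := ⟨hp⟩
  haveI : NeZero p := ⟨hp.ne_zero⟩
  have hv : ∀ y : ZMod p, ((y.val : ℕ) : ZMod p) = y := fun y => ZMod.natCast_rightInverse y
  constructor
  · rintro ⟨f, hfb, hf⟩
    have E : ∀ s b x y : ZMod p,
        f (b + x, y + Φ s) = ((f (b, y)).1 + (f (b - s, x)).2,
          (f (b, y)).2 + Φ' ((f (b, y)).1 - (f (b - s, x)).1)) := by
      intro s b x y
      have h1 := hf (b - s, x) (b, y)
      rw [hC, sub_sub_cancel] at h1
      rw [h1, ← hD]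
    have E1 : ∀ s b x y : ZMod p,
        (f (b + x, y + Φ s)).1 = (f (b, y)).1 + (f (b - s, x)).2 :=
      fun s b x y => congrArg Prod.fst (E s b x y)
    have E2 : ∀ s b x y : ZMod p,
        (f (b + x, y + Φ s)).2 = (f (b, y)).2 + Φ' ((f (b, y)).1 - (f (b - s, x)).1) :=
      fun s b x y => congrArg Prod.snd (E s b x y)
    obtain ⟨s₀, s₁, hs⟩ := hΦnc
    have hdne : Φ s₀ - Φ s₁ ≠ 0 := sub_ne_zero.mpr hs
    -- Step A : vertical difference equation
    have stepA : ∀ b z : ZMod p, (f (b, z + (Φ s₀ - Φ s₁))).1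
        = (f (b, z)).1 + ((f (b - s₀, 0)).2 - (f (b - s₁, 0)).2) := by
      intro b z
      have h0 := E1 s₀ b 0 (z - Φ s₁)
      have h1 := E1 s₁ b 0 (z - Φ s₁)
      rw [add_zero, show z - Φ s₁ + Φ s₀ = z + (Φ s₀ - Φ s₁) from by ring] at h0
      rw [add_zero, show z - Φ s₁ + Φ s₁ = z from by ring] at h1
      linear_combination h0 - h1
    have key : ∀ (b : ZMod p) (n : ℕ), (f (b, (n : ZMod p) * (Φ s₀ - Φ s₁))).1
        = (f (b, 0)).1 + (n : ZMod p) * ((f (b - s₀, 0)).2 - (f (b - s₁, 0)).2) := by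
      intro b n
      induction n with
      | zero => simp
      | succ n ih =>
        have h := stepA b ((n : ZMod p) * (Φ s₀ - Φ s₁))
        rw [ih] at h
        rw [show ((n + 1 : ℕ) : ZMod p) * (Φ s₀ - Φ s₁)
            = (n : ZMod p) * (Φ s₀ - Φ s₁) + (Φ s₀ - Φ s₁) from by push_cast; ring, h]
        push_cast; ring
    have lin : ∀ b y : ZMod p, (f (b, y)).1
        = (f (b, 0)).1 + y * (Φ s₀ - Φ s₁)⁻¹ * ((f (b - s₀, 0)).2 - (f (b - s₁, 0)).2) := by
      intro b y
      have h := key b (y * (Φ s₀ - Φ s₁)⁻¹).val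
      rw [hv (y * (Φ s₀ - Φ s₁)⁻¹)] at h
      rw [show y * (Φ s₀ - Φ s₁)⁻¹ * (Φ s₀ - Φ s₁) = y from by
        rw [mul_assoc, inv_mul_cancel₀ hdne, mul_one]] at h
      exact h
    have cconst : ∀ b x : ZMod p,
        (f (b + x - s₀, 0)).2 - (f (b + x - s₁, 0)).2
          = (f (b - s₀, 0)).2 - (f (b - s₁, 0)).2 := by
      intro b x
      have h1 := E1 s₀ b x 1
      have h0 := E1 s₀ b x 0
      rw [lin (b + x) (1 + Φ s₀), lin b 1] at h1
      rw [lin (b + x) (0 + Φ s₀), lin b 0] at h0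
      have hq : (Φ s₀ - Φ s₁)⁻¹ * ((f (b + x - s₀, 0)).2 - (f (b + x - s₁, 0)).2)
          = (Φ s₀ - Φ s₁)⁻¹ * ((f (b - s₀, 0)).2 - (f (b - s₁, 0)).2) := by
        linear_combination h1 - h0
      exact mul_left_cancel₀ (inv_ne_zero hdne) hq
    have hAv : ∀ b s : ZMod p, (f (b - s, 0)).2
        = Φ s * (Φ s₀ - Φ s₁)⁻¹ * ((f (b - s₀, 0)).2 - (f (b - s₁, 0)).2) := by
      intro b s
      have h1 := E1 s b 0 0
      rw [add_zero, lin b (0 + Φ s)] at h1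
      linear_combination -h1
    have czero : ∀ a : ZMod p, (f (a - s₀, 0)).2 - (f (a - s₁, 0)).2 = 0 := by
      intro a
      have e0 := hAv (a + s₀) s₀
      have e1 := hAv (a + s₁) s₁
      rw [cconst a s₀, show a + s₀ - s₀ = a from by ring] at e0
      rw [cconst a s₁, show a + s₁ - s₁ = a from by ring] at e1
      have h2 : (Φ s₀ - Φ s₁) * ((Φ s₀ - Φ s₁)⁻¹ * ((f (a - s₀, 0)).2 - (f (a - s₁, 0)).2))
          = 0 := by linear_combination e1 - e0
      rwa [mul_inv_cancel_left₀ hdne] at h2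
    have lin' : ∀ b y : ZMod p, (f (b, y)).1 = (f (b, 0)).1 := by
      intro b y
      rw [lin b y, czero b]; ring
    have hP : ∀ s b x : ZMod p, (f (b + x, 0)).1 = (f (b, 0)).1 + (f (b - s, x)).2 := by
      intro s b x
      have h := E1 s b x 0
      rwa [lin' (b + x) (0 + Φ s)] at h
    have hH : ∀ a x : ZMod p, (f (a, x)).2 = (f (x, 0)).1 - (f (0, 0)).1 := by
      intro a x
      have h := hP (-a) 0 x
      rw [zero_add, show (0 : ZMod p) - -a = a from by ring] at h
      linear_combination -h
    have hadd : ∀ b x : ZMod p,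
        (f (b + x, 0)).1 = (f (b, 0)).1 + (f (x, 0)).1 - (f (0, 0)).1 := by
      intro b x
      have h := hP b b x
      rw [sub_self, hH 0 x] at h
      linear_combination h
    have hlin1 : ∀ n : ℕ, (f ((n : ZMod p), 0)).1
        = (f (0, 0)).1 + (n : ZMod p) * ((f (1, 0)).1 - (f (0, 0)).1) := by
      intro n
      induction n with
      | zero => simp
      | succ n ih =>
        rw [show ((n + 1 : ℕ) : ZMod p) = (n : ZMod p) + 1 from by push_cast; ring,
          hadd (n : ZMod p) 1, ih]
        push_cast; ring
    have hlinall : ∀ t : ZMod p, (f (t, 0)).1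
        = (f (0, 0)).1 + t * ((f (1, 0)).1 - (f (0, 0)).1) := by
      intro t
      have h := hlin1 t.val
      rwa [hv t] at h
    have fform : ∀ a x : ZMod p, f (a, x)
        = ((f (0, 0)).1 + ((f (1, 0)).1 - (f (0, 0)).1) * a,
            ((f (1, 0)).1 - (f (0, 0)).1) * x) := by
      intro a x
      have h1 : (f (a, x)).1 = (f (0, 0)).1 + ((f (1, 0)).1 - (f (0, 0)).1) * a := by
        rw [lin' a x, hlinall a]; ring
      have h2 : (f (a, x)).2 = ((f (1, 0)).1 - (f (0, 0)).1) * x := by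
        rw [hH a x, hlinall x]; ring
      exact Prod.ext h1 h2
    have main : ∃ α β : ZMod p, ∀ a x : ZMod p, f (a, x) = (β + α * a, α * x) :=
      ⟨_, _, fform⟩
    obtain ⟨α, β, hform⟩ := main
    have hα : α ≠ 0 := by
      intro h
      have h01 : f ((0 : ZMod p), (0 : ZMod p)) = f (1, 0) := by
        rw [hform 0 0, hform 1 0, h]; norm_num
      have h02 := hfb.1 h01
      exact one_ne_zero (congrArg Prod.fst h02).symm
    refine ⟨α, hα, ?_⟩
    intro A
    have h := E2 A 0 0 0
    rw [show (0 : ZMod p) + 0 = 0 from by ring, show (0 : ZMod p) + Φ A = Φ A from by ring,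
      show (0 : ZMod p) - A = -A from by ring] at h
    rw [hform 0 (Φ A), hform 0 0, hform (-A) 0] at h
    dsimp only at h
    rw [show β + α * 0 - (β + α * (-A)) = α * A from by ring] at h
    field_simp
    linear_combination h
  · rintro ⟨α, hα, hrel⟩
    refine ⟨fun u => (α * u.1, α * u.2), ⟨?_, ?_⟩⟩
    · apply Function.bijective_iff_has_inverse.mpr
      refine ⟨fun u => (α⁻¹ * u.1, α⁻¹ * u.2), ?_, ?_⟩
      · rintro ⟨a, b⟩
        simp [inv_mul_cancel_left₀ hα]
      · rintro ⟨a, b⟩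
        simp [mul_inv_cancel_left₀ hα]
    · rintro ⟨a, x⟩ ⟨b, y⟩
      dsimp only
      rw [hC, hD]
      have hr := hrel (b - a)
      refine Prod.ext ?_ ?_
      · dsimp only; ring
      · dsimp only
        rw [hr, show α * b - α * a = α * (b - a) from by ring, mul_add,
          mul_inv_cancel_left₀ hα]
end

section
/- Let p be a prime and Φ : ℤ_p → ℤ_p a non-constant map with Φ(A) = Φ(−A) for all A ∈ ℤ_p, and consider the cycle set X = ℤ_p × ℤ_p with (a,x)·(b,y) = (b+x, y + Φ(b−a)). Then a bijection of X is an automorphism of this cycle set if and only if it has the form (a,x) ↦ (αa + β, αx) for some α ∈ ℤ_p ∖ {0} and β ∈ ℤ_p with α⁻¹·Φ(αA) = Φ(A) for all A ∈ ℤ_p. -/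
/-!
Write `f = (F, G)`. The first coordinate of the homomorphism equation,
`F (b + x, y + Φ (b - a)) = F (b, y) + G (a, x)`, says that `F` is shifted by the constant
`G (a, x)` along the translation `σ_(a,x)`. Since `σ_(a,x)` is the shear
`ψ_a : (b, y) ↦ (b, y + Φ (b - a))` followed by the translation `τ_x : (b, y) ↦ (b + x, y)`,
shifts add up under composition, and `τ_x ψ_a τ_x⁻¹ = ψ_(a+x)`, the shift `G (a, 0)` of `ψ_a`
does not depend on `a`; then neither does `G (a, x)`. Hence `F (b, ·)` is periodic with period
`Φ i - Φ j ≠ 0`, so constant on `ℤ_p`, and the equation collapses to `F (b + x) = F b + G x` with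
`G` additive, i.e. `f` is affine of the stated shape. For affine maps the homomorphism property
is exactly `Φ (α t) = α Φ t`.
-/

def cycleOp {R : Type*} [AddCommGroup R] (Φ : R → R) (u v : R × R) : R × R :=
  (v.1 + u.2, v.2 + Φ (v.1 - u.1))

def IsCycleOpHom {R : Type*} [AddCommGroup R] (Φ : R → R) (f : R × R → R × R) : Prop :=
  ∀ u v, f (cycleOp Φ u v) = cycleOp Φ (f u) (f v)

theorem isCycleOpHom_affine_iff {R : Type*} [CommRing R] (Φ : R → R) (α β : R) :
    IsCycleOpHom Φ (fun u => (α * u.1 + β, α * u.2)) ↔ ∀ t, Φ (α * t) = α * Φ t := by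
  constructor
  · intro h t
    have h_snd := congrArg Prod.snd (h (0, 0) (t, 0))
    simp only [cycleOp] at h_snd
    simpa [mul_add] using h_snd.symm
  · rintro h ⟨a, x⟩ ⟨b, y⟩
    simp only [cycleOp, Prod.mk.injEq]
    refine ⟨by ring, ?_⟩
    rw [show α * b + β - (α * a + β) = α * (b - a) by ring, h]
    ring

theorem ZMod.apply_eq_apply_zero_of_periodic {p : ℕ} [Fact p.Prime] {α : Type*}
    {g : ZMod p → α} {d : ZMod p} (hg : Function.Periodic g d) (hd : d ≠ 0) (y : ZMod p) :
    g y = g 0 := by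
  have h := hg.nsmul_eq (y / d).val
  rwa [nsmul_eq_mul, ZMod.natCast_zmod_val, div_mul_cancel₀ y hd] at h

theorem ZMod.eq_mul_of_map_add {n : ℕ} {g : ZMod n → ZMod n} (hg : ∀ x y, g (x + y) = g x + g y)
    (x : ZMod n) : g x = x * g 1 := by
  simpa using ZMod.map_smul (AddMonoidHom.mk' g hg) x 1

namespace IsCycleOpHom

section AddCommGroup

variable {R : Type*} [AddCommGroup R] {Φ : R → R} {f : R × R → R × R}

theorem fst_apply (hf : IsCycleOpHom Φ f) (a b x y : R) :
    (f (b + x, y + Φ (b - a))).1 = (f (b, y)).1 + (f (a, x)).2 :=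
  congrArg Prod.fst (hf (a, x) (b, y))

theorem snd_apply_mk_zero (hf : IsCycleOpHom Φ f) (a : R) : (f (a, 0)).2 = (f (0, 0)).2 := by
  have h₁ := hf.fst_apply 0 0 a (Φ 0)
  have h₂ := hf.fst_apply a a 0 (Φ 0)
  have h₃ := hf.fst_apply 0 0 0 0
  have h₄ := hf.fst_apply 0 0 a 0
  simp only [zero_add, add_zero, sub_self] at h₁ h₂ h₃ h₄
  linear_combination (norm := abel) h₁ - h₂ - h₄ + h₃

theorem snd_apply_eq (hf : IsCycleOpHom Φ f) (a x : R) : (f (a, x)).2 = (f (0, x)).2 := by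
  have h_conj : ∀ a, (f (x, 0)).1 + (f (0, 0)).2 = (f (0, 0)).1 + (f (a, x)).2 := fun a => by
    have h₁ := hf.fst_apply (a + x) (0 + x) 0 0
    have h₂ := hf.fst_apply a 0 x 0
    rw [add_sub_add_right_eq_sub, hf.snd_apply_mk_zero] at h₁
    simp only [zero_add, add_zero] at h₁ h₂
    rw [← h₁, h₂]
  exact add_left_cancel ((h_conj a).symm.trans (h_conj 0))

theorem fst_apply_add_phi (hf : IsCycleOpHom Φ f) (b y t : R) :
    (f (b, y + Φ t)).1 = (f (b, y)).1 + (f (0, 0)).2 := by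
  simpa [hf.snd_apply_mk_zero] using hf.fst_apply (b - t) b 0 y

end AddCommGroup

section ZMod

variable {p : ℕ} [Fact p.Prime] {Φ : ZMod p → ZMod p} {f : ZMod p × ZMod p → ZMod p × ZMod p}

theorem fst_apply_eq (hf : IsCycleOpHom Φ f) {i j : ZMod p} (hij : Φ i ≠ Φ j) (b y : ZMod p) :
    (f (b, y)).1 = (f (b, 0)).1 := by
  have h_per : Function.Periodic (fun y => (f (b, y)).1) (Φ i - Φ j) := fun y => by
    have h₁ := hf.fst_apply_add_phi b (y - Φ j) i
    have h₂ := hf.fst_apply_add_phi b (y - Φ j) j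
    rw [sub_add_cancel] at h₂
    show (f (b, y + (Φ i - Φ j))).1 = (f (b, y)).1
    rw [show y + (Φ i - Φ j) = y - Φ j + Φ i by ring, h₁, h₂]
  exact ZMod.apply_eq_apply_zero_of_periodic h_per (sub_ne_zero.mpr hij) y

theorem exists_affine (hf : IsCycleOpHom Φ f) (hΦ : ∃ i j, Φ i ≠ Φ j) :
    ∃ α β, ∀ a x, f (a, x) = (α * a + β, α * x) := by
  obtain ⟨i, j, hij⟩ := hΦ
  set H : ZMod p → ZMod p := fun b => (f (b, 0)).1
  have hG : ∀ x, (f (0, x)).2 = H x - H 0 := fun x => by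
    have h := hf.fst_apply 0 0 x 0
    rw [zero_add, hf.fst_apply_eq hij] at h
    exact eq_sub_of_add_eq' h.symm
  have H_add : ∀ b x, H (b + x) = H b + (H x - H 0) := fun b x => by
    simpa [H, hf.fst_apply_eq hij, hG] using hf.fst_apply 0 b x 0
  have hH_linear := ZMod.eq_mul_of_map_add (g := fun x => H x - H 0)
    (fun x y => by simp only [H_add]; ring)
  refine ⟨H 1 - H 0, H 0, fun a x => Prod.ext ?_ ?_⟩
  · rw [hf.fst_apply_eq hij]
    show H a = (H 1 - H 0) * a + H 0
    rw [mul_comm, ← hH_linear]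
    ring
  · rw [hf.snd_apply_eq, hG, hH_linear, mul_comm]

end ZMod

end IsCycleOpHom

theorem stmt11_general {p : ℕ} (hp : p.Prime) (Φ : ZMod p → ZMod p)
    (hΦnc : ∃ i j : ZMod p, Φ i ≠ Φ j)
    (C : CycleSet (ZMod p × ZMod p))
    (hC : ∀ a b x y : ZMod p, C.op (a, x) (b, y) = (b + x, y + Φ (b - a)))
    (f : ZMod p × ZMod p → ZMod p × ZMod p) (hf : Function.Bijective f) :
    (∀ u v : ZMod p × ZMod p, f (C.op u v) = C.op (f u) (f v)) ↔
    ∃ α β : ZMod p, α ≠ 0 ∧ (∀ A : ZMod p, α⁻¹ * Φ (α * A) = Φ A) ∧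
      ∀ a x : ZMod p, f (a, x) = (α * a + β, α * x) := by
  have : Fact p.Prime := ⟨hp⟩
  have hop : C.op = cycleOp Φ := funext₂ fun u v => hC u.1 v.1 u.2 v.2
  rw [hop]
  change IsCycleOpHom Φ f ↔ _
  constructor
  · intro hom
    obtain ⟨α, β, hαβ⟩ := hom.exists_affine hΦnc
    have hα : α ≠ 0 := by
      rintro rfl
      have h : f (0, 0) = f (0, 1) := by simp only [hαβ, zero_mul]
      simpa using hf.injective h
    rw [show f = _ from funext fun u => hαβ u.1 u.2, isCycleOpHom_affine_iff] at hom
    exact ⟨α, β, hα, fun A => by rw [inv_mul_eq_iff_eq_mul₀ hα, hom], hαβ⟩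
  · rintro ⟨α, β, hα, hΦα, hαβ⟩
    rw [show f = _ from funext fun u => hαβ u.1 u.2, isCycleOpHom_affine_iff]
    exact fun A => (inv_mul_eq_iff_eq_mul₀ hα).1 (hΦα A)

theorem stmt11 {p : ℕ} (hp : p.Prime) (Φ : ZMod p → ZMod p)
    (hΦnc : ∃ i j : ZMod p, Φ i ≠ Φ j) (hΦev : ∀ A : ZMod p, Φ (-A) = Φ A)
    (C : CycleSet (ZMod p × ZMod p))
    (hC : ∀ a b x y : ZMod p, C.op (a, x) (b, y) = (b + x, y + Φ (b - a)))
    (f : ZMod p × ZMod p → ZMod p × ZMod p) (hf : Function.Bijective f) :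
    (∀ u v : ZMod p × ZMod p, f (C.op u v) = C.op (f u) (f v)) ↔
    ∃ α β : ZMod p, α ≠ 0 ∧ (∀ A : ZMod p, α⁻¹ * Φ (α * A) = Φ A) ∧
      ∀ a x : ZMod p, f (a, x) = (α * a + β, α * x) :=
  stmt11_general hp Φ hΦnc C hC f hf
end

section
/- Let p be a prime and Φ : ℤ_p → ℤ_p a non-constant map with Φ(A) = Φ(−A) for all A ∈ ℤ_p, and consider the cycle set X = ℤ_p × ℤ_p with (a,x)·(b,y) = (b+x, y + Φ(b−a)). Then any subset S ⊆ ℤ_p × ℤ_p that contains {(a,0) : a ∈ ℤ_p} and is closed under the operation · (i.e. u·v ∈ S whenever u,v ∈ S) equals ℤ_p × ℤ_p; that is, the elements (a,0), a ∈ ℤ_p, generate the whole cycle set. -/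
theorem stmt12 {p : ℕ} (hp : p.Prime) (Φ : ZMod p → ZMod p)
    (hΦnc : ∃ i j : ZMod p, Φ i ≠ Φ j) (hΦev : ∀ A : ZMod p, Φ (-A) = Φ A)
    (S : Set (ZMod p × ZMod p))
    (hsub : ∀ a : ZMod p, ((a, (0 : ZMod p)) : ZMod p × ZMod p) ∈ S)
    (hclosed : ∀ u ∈ S, ∀ v ∈ S,
      ((v.1 + u.2, v.2 + Φ (v.1 - u.1)) : ZMod p × ZMod p) ∈ S) :
    S = Set.univ := by
  haveI : Fact p.Prime := ⟨hp⟩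
  obtain ⟨i, j, hij⟩ := hΦnc
  set u := Φ i with hu
  set v := Φ j with hv
  have step : ∀ y : ZMod p, (∀ a, ((a, y) : ZMod p × ZMod p) ∈ S) →
      ∀ d a, ((a, y + Φ d) : ZMod p × ZMod p) ∈ S := by
    intro y hy d a
    have h := hclosed (a - d, 0) (hsub _) (a, y) (hy _)
    simpa using h
  have key : ∀ m n : ℕ, ∀ a : ZMod p,
      ((a, m • u + n • v) : ZMod p × ZMod p) ∈ S := by
    intro m
    induction m with
    | zero =>
      intro n
      induction n with
      | zero => intro a; simpa using hsub a
      | succ n ih =>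
        intro a
        have h := step _ ih j a
        simp only [zero_smul, zero_add, ← hv] at h ⊢
        rw [succ_nsmul]
        exact h
    | succ m ih =>
      intro n a
      have h := step _ (ih n) i a
      have e : (m + 1) • u + n • v = (m • u + n • v) + u := by
        rw [succ_nsmul]; ring
      rw [e]
      exact h
  ext ⟨a, z⟩
  simp only [Set.mem_univ, iff_true]
  have hvu : v - u ≠ 0 := sub_ne_zero.mpr (Ne.symm hij)
  set k := (z * (v - u)⁻¹).val with hk
  have hkp : k < p := ZMod.val_lt _
  have hcast : (k : ZMod p) = z * (v - u)⁻¹ := by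
    simp [hk, ZMod.natCast_val, ZMod.cast_id]
  have h := key (p - k) k a
  have e : (p - k) • u + k • v = z := by
    rw [nsmul_eq_mul, nsmul_eq_mul, Nat.cast_sub hkp.le, ZMod.natCast_self, hcast]
    field_simp
    ring
  rwa [e] at h
end

section
/- Let A be a finite brace, L ⊆ A a left ideal (a subgroup of (A,+) with λ_a(L) ⊆ L for all a ∈ A), and G a normal subgroup of the group (A,∘). Set F = Fix_A(L∩G) = {a ∈ A : λ_s(a) = a for all s ∈ L∩G}. Then F is a subbrace of A (a subgroup of both (A,+) and (A,∘)), and F is contained in the normalizer of L∩G in (A,∘): for every a ∈ F and s ∈ L∩G one has a∘s∘ā ∈ L∩G. -/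
/-- `Fix_A(S)`: the set of `a ∈ A` with `λ_s(a) = a` for all `s ∈ S`. -/
def Brace.fixSet {A : Type*} [AddCommGroup A] (Br : Brace A) (S : Set A) : Set A :=
  {a : A | ∀ s ∈ S, Br.lam s a = a}

namespace Brace

variable {A : Type*} [AddCommGroup A] (B : Brace A)

lemma circ_inv (a : A) : B.circ a (B.inv a) = 0 := by
  calc B.circ a (B.inv a)
      = B.circ 0 (B.circ a (B.inv a)) := (B.zero_circ _).symm
    _ = B.circ (B.circ (B.inv (B.inv a)) (B.inv a)) (B.circ a (B.inv a)) := by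
        rw [B.inv_circ]
    _ = B.circ (B.inv (B.inv a)) (B.circ (B.circ (B.inv a) a) (B.inv a)) := by
        rw [B.circ_assoc, B.circ_assoc]
    _ = 0 := by rw [B.inv_circ, B.zero_circ, B.inv_circ]

lemma inv_inv (a : A) : B.inv (B.inv a) = a := by
  calc B.inv (B.inv a)
      = B.circ (B.inv (B.inv a)) (B.circ (B.inv a) a) := by
        rw [B.inv_circ, B.circ_zero]
    _ = B.circ (B.circ (B.inv (B.inv a)) (B.inv a)) a := (B.circ_assoc _ _ _).symm
    _ = a := by rw [B.inv_circ, B.zero_circ]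

lemma circ_neg_s13 (a b : A) : B.circ a (-b) = a - B.circ a b + a := by
  have h : B.circ a (b + -b) = B.circ a b - a + B.circ a (-b) := B.circ_add a b (-b)
  rw [add_neg_cancel, B.circ_zero] at h
  replace h := h.symm
  rw [← eq_neg_add_iff_add_eq] at h
  rw [h]; abel

lemma lam_add (a b c : A) : B.lam a (b + c) = B.lam a b + B.lam a c := by
  simp only [lam, B.circ_add]; abel

lemma lam_zero (a : A) : B.lam a 0 = 0 := by
  simp [lam, B.circ_zero]

lemma lam_neg (a b : A) : B.lam a (-b) = -B.lam a b := by
  have := B.lam_add a b (-b)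
  rw [add_neg_cancel, B.lam_zero] at this
  exact eq_neg_of_add_eq_zero_right this.symm

lemma lam_lam (a b c : A) : B.lam a (B.lam b c) = B.lam (B.circ a b) c := by
  simp only [lam, B.circ_add, B.circ_neg_s13, B.circ_assoc]
  abel

lemma zero_lam (b : A) : B.lam 0 b = b := by
  simp [lam, B.zero_circ]

lemma lam_inv_lam (a b : A) : B.lam (B.inv a) (B.lam a b) = b := by
  rw [B.lam_lam, B.inv_circ, B.zero_lam]

lemma lam_lam_inv (a b : A) : B.lam a (B.lam (B.inv a) b) = b := by
  rw [B.lam_lam, B.circ_inv, B.zero_lam]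

lemma circ_eq_add_lam (a b : A) : B.circ a b = a + B.lam a b := by
  simp [lam]

lemma add_eq_circ_lam (a b : A) : a + b = B.circ a (B.lam (B.inv a) b) := by
  rw [B.circ_eq_add_lam, B.lam_lam_inv]

end Brace

theorem stmt13 {A : Type*} [AddCommGroup A] [Fintype A] (Br : Brace A)
    (L : Set A)
    (hL0 : (0 : A) ∈ L)
    (hLadd : ∀ x ∈ L, ∀ y ∈ L, x + y ∈ L)
    (hLneg : ∀ x ∈ L, -x ∈ L)
    (hLlam : ∀ a : A, ∀ l ∈ L, Br.lam a l ∈ L)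
    (G : Set A)
    (hG0 : (0 : A) ∈ G)
    (hGmul : ∀ x ∈ G, ∀ y ∈ G, Br.circ x y ∈ G)
    (hGinv : ∀ x ∈ G, Br.inv x ∈ G)
    (hGnorm : ∀ a : A, ∀ g ∈ G, Br.circ (Br.circ a g) (Br.inv a) ∈ G) :
    (0 : A) ∈ Br.fixSet (L ∩ G) ∧
    (∀ x ∈ Br.fixSet (L ∩ G), ∀ y ∈ Br.fixSet (L ∩ G), x + y ∈ Br.fixSet (L ∩ G)) ∧
    (∀ x ∈ Br.fixSet (L ∩ G), -x ∈ Br.fixSet (L ∩ G)) ∧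
    (∀ x ∈ Br.fixSet (L ∩ G), ∀ y ∈ Br.fixSet (L ∩ G), Br.circ x y ∈ Br.fixSet (L ∩ G)) ∧
    (∀ x ∈ Br.fixSet (L ∩ G), Br.inv x ∈ Br.fixSet (L ∩ G)) ∧
    (∀ a ∈ Br.fixSet (L ∩ G), ∀ s ∈ L ∩ G,
      Br.circ (Br.circ a s) (Br.inv a) ∈ L ∩ G) := by
  set H : Set A := L ∩ G with hH
  -- For a in the fix set and s ∈ H, s ∘ a = s + a.
  have hfix : ∀ a ∈ Br.fixSet H, ∀ s ∈ H, Br.circ s a = s + a := by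
    intro a ha s hs
    have h := ha s hs
    rw [Brace.lam] at h
    conv_rhs => rw [← h]
    abel
  -- Key: λ_{ā}(s) ∈ H for a ∈ Fix, s ∈ H, and it equals ā ∘ (s ∘ a).
  have key : ∀ a ∈ Br.fixSet H, ∀ s ∈ H,
      Br.lam (Br.inv a) s ∈ H := by
    intro a ha s hs
    have heq : Br.circ a (Br.lam (Br.inv a) s) = Br.circ s a := by
      rw [← Br.add_eq_circ_lam, hfix a ha s hs, add_comm]
    have heq2 : Br.lam (Br.inv a) s = Br.circ (Br.inv a) (Br.circ s a) := by
      rw [← heq, ← Br.circ_assoc, Br.inv_circ, Br.zero_circ]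
    constructor
    · exact hLlam _ _ hs.1
    · have := hGnorm (Br.inv a) s hs.2
      rw [Br.inv_inv, Br.circ_assoc] at this
      rw [heq2]; exact this
  -- Surjectivity of λ_{ā} on H, by finiteness.
  have surj : ∀ a ∈ Br.fixSet H, ∀ s ∈ H, ∃ u ∈ H, Br.lam (Br.inv a) u = s := by
    intro a ha s hs
    have hfin : H.Finite := Set.toFinite H
    have hmaps : Set.MapsTo (Br.lam (Br.inv a)) H H := fun u hu => key a ha u hu
    have hinj : Set.InjOn (Br.lam (Br.inv a)) H := by
      intro x _ y _ hxy
      have : Br.lam a (Br.lam (Br.inv a) x) = Br.lam a (Br.lam (Br.inv a) y) := by rw [hxy]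
      rwa [Br.lam_lam_inv, Br.lam_lam_inv] at this
    have hbij := (hfin.injOn_iff_bijOn_of_mapsTo hmaps).mp hinj
    obtain ⟨u, hu, huv⟩ := hbij.2.2 hs
    exact ⟨u, hu, huv⟩
  -- λ_a(s) ∈ H for a ∈ Fix, s ∈ H.
  have lamF : ∀ a ∈ Br.fixSet H, ∀ s ∈ H, Br.lam a s ∈ H := by
    intro a ha s hs
    obtain ⟨u, hu, huv⟩ := surj a ha s hs
    rw [← huv, Br.lam_lam_inv]
    exact hu
  refine ⟨?_, ?_, ?_, ?_, ?_, ?_⟩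
  · intro s _; exact Br.lam_zero s
  · intro x hx y hy s hs
    rw [Br.lam_add, hx s hs, hy s hs]
  · intro x hx s hs
    rw [Br.lam_neg, hx s hs]
  · -- closure under ∘
    intro x hx y hy s hs
    have hs' : Br.lam (Br.inv x) s ∈ H := key x hx s hs
    have hc : Br.circ s (Br.circ x y) = s + Br.circ x y := by
      calc Br.circ s (Br.circ x y)
          = Br.circ (Br.circ s x) y := (Br.circ_assoc _ _ _).symm
        _ = Br.circ (Br.circ x (Br.lam (Br.inv x) s)) y := by
            rw [← Br.add_eq_circ_lam, hfix x hx s hs, add_comm]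
        _ = Br.circ x (Br.circ (Br.lam (Br.inv x) s) y) := Br.circ_assoc _ _ _
        _ = Br.circ x (Br.lam (Br.inv x) s + y) := by rw [hfix y hy _ hs']
        _ = Br.circ x (Br.lam (Br.inv x) s) - x + Br.circ x y := Br.circ_add _ _ _
        _ = (x + s) - x + Br.circ x y := by rw [← Br.add_eq_circ_lam]
        _ = s + Br.circ x y := by abel
    rw [Brace.lam, hc]; abel
  · -- closure under inv
    intro a ha s hs
    obtain ⟨u, hu, huv⟩ := surj a ha s hs
    have heq2 : Br.lam (Br.inv a) u = Br.circ (Br.inv a) (Br.circ u a) := by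
      have heq : Br.circ a (Br.lam (Br.inv a) u) = Br.circ u a := by
        rw [← Br.add_eq_circ_lam, hfix a ha u hu, add_comm]
      rw [← heq, ← Br.circ_assoc, Br.inv_circ, Br.zero_circ]
    have hsa : Br.circ s (Br.inv a) = Br.circ (Br.inv a) u := by
      rw [← huv, heq2, Br.circ_assoc, Br.circ_assoc, Br.circ_inv, Br.circ_zero]
    have : Br.circ (Br.inv a) u = Br.inv a + s := by
      rw [Br.circ_eq_add_lam, huv]
    rw [Brace.lam, hsa, this]; abel
  · -- normalizer
    intro a ha s hs
    have ht : Br.lam a s ∈ H := lamF a ha s hs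
    have h1 : Br.circ a s = Br.circ (Br.lam a s) a := by
      rw [Br.circ_eq_add_lam a s, hfix a ha _ ht, add_comm]
    rw [h1, Br.circ_assoc, Br.circ_inv, Br.circ_zero]
    exact ht
end

section
/- Let (X,·) be a cycle set and φ an automorphism of (X,·). Then the operation x ·_φ y := φ(x·y) also defines a cycle set structure on X. Moreover, if (X,·) is irretractable, then so is (X,·_φ). -/
theorem stmt14 {X : Type*} (C : CycleSet X) (φ : X → X)
    (hbij : Function.Bijective φ)
    (hhom : ∀ x y : X, φ (C.op x y) = C.op (φ x) (φ y)) :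
    (∃ D : CycleSet X, D.op = fun x y => φ (C.op x y)) ∧
    (C.Irretractable → ∀ D : CycleSet X,
      (D.op = fun x y => φ (C.op x y)) → D.Irretractable) := by
  constructor
  · refine ⟨⟨fun x y => φ (C.op x y), ?_, ?_, ?_⟩, rfl⟩
    · intro x y z
      rw [← hhom, ← hhom, C.c1]
    · intro x
      exact hbij.comp (C.c2 x)
    · have : (fun x : X => φ (C.op x x)) = (fun x : X => C.op x x) ∘ φ := by
        funext x; exact hhom x x
      rw [this]
      exact C.c3.comp hbij
  · intro hirr D hD x y hxy
    apply hirr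
    have h1 : D.op x = fun z => φ (C.op x z) := by rw [hD]
    have h2 : D.op y = fun z => φ (C.op y z) := by rw [hD]
    funext z
    have := congrFun (h1 ▸ h2 ▸ hxy) z
    exact hbij.injective this
end

section
/- Let (X,·) be a finite cycle set and φ an automorphism of (X,·) of order m with gcd(m, |𝒢(X,·)|) = 1 such that φ has a fixed point. Consider the deformed cycle set (X,·_φ) with x ·_φ y = φ(x·y), whose σ-maps are σ′_x = φ∘σ_x. Then, as subgroups of Sym(X): the subgroup generated by {σ′_x : x ∈ X} equals the subgroup generated by 𝒢(X,·) ∪ {φ}; 𝒢(X,·) is a normal subgroup of it; and 𝒢(X,·) ∩ ⟨φ⟩ = {id} (so 𝒢(X,·_φ) = 𝒢(X,·) ⋊ ⟨φ⟩). Moreover, if (X,·) is indecomposable then so is (X,·_φ). -/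
/-!
Write `σ'_x = φ σ_x` for the σ-maps of the deformation. Since `φ` is an automorphism,
`φ σ_x φ⁻¹ = σ_{φ x}`, so conjugation by `φ` preserves `𝒢(X)`. At a fixed point `x₀` of `φ`
this says that `φ` commutes with `σ_{x₀}`; as the order of `σ_{x₀}` divides `|𝒢(X)|`, it is
coprime to that of `φ`, so `φ` is a power of `σ'_{x₀} = φ σ_{x₀}`. Hence `φ ∈ 𝒢(X, ·_φ)`, and
then also `σ_x = φ⁻¹ σ'_x ∈ 𝒢(X, ·_φ)`. The intersection `𝒢(X) ∩ ⟨φ⟩` is trivial because the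
two orders are coprime.
-/

theorem Commute.mem_zpowers_mul_of_coprime {G : Type*} [Group G] {a b : G} (h : Commute a b)
    (hab : (orderOf a).Coprime (orderOf b)) : a ∈ Subgroup.zpowers (a * b) := by
  obtain ⟨k, hka, hkb⟩ := Nat.chineseRemainder hab 1 0
  have ha : a ^ (k : ℕ) = a := by
    simpa using (pow_eq_pow_iff_modEq (x := a) (n := k) (m := 1)).mpr hka
  have hb : b ^ (k : ℕ) = 1 := orderOf_dvd_iff_pow_eq_one.mp (Nat.modEq_zero_iff_dvd.mp hkb)
  exact ⟨k, by simp only [zpow_natCast, h.mul_pow, ha, hb, mul_one]⟩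

namespace CycleSet

variable {X : Type*} (C : CycleSet X)

@[simp]
theorem sigma_apply (x y : X) : C.sigma x y = C.op x y := rfl

theorem sigma_mem_permGroup (x : X) : C.sigma x ∈ C.permGroup :=
  Subgroup.subset_closure ⟨x, rfl⟩

theorem Indecomposable.of_permGroup_le {C D : CycleSet X} (hC : C.Indecomposable)
    (hle : C.permGroup ≤ D.permGroup) : D.Indecomposable := fun x y =>
  let ⟨g, hg, hgx⟩ := hC x y
  ⟨g, hle hg, hgx⟩

section Automorphism

variable {C} {φ : Equiv.Perm X} (hφ : ∀ x y : X, φ (C.op x y) = C.op (φ x) (φ y))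
include hφ

theorem conj_sigma (x : X) : φ * C.sigma x * φ⁻¹ = C.sigma (φ x) := by
  ext y
  simp [hφ]

theorem mem_normalizer_permGroup : φ ∈ Subgroup.normalizer (C.permGroup : Set (Equiv.Perm X)) := by
  have hcomp : (MulAut.conj φ : Equiv.Perm X →* Equiv.Perm X) ∘ C.sigma = C.sigma ∘ φ :=
    funext (conj_sigma hφ)
  rw [Subgroup.mem_normalizer_iff_map_conj_eq, permGroup, MonoidHom.map_closure, ← Set.range_comp,
    hcomp, φ.surjective.range_comp]

theorem commute_sigma_of_apply_eq {x : X} (hx : φ x = x) : Commute φ (C.sigma x) := by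
  have h := conj_sigma hφ x
  rwa [hx, mul_inv_eq_iff_eq_mul] at h

end Automorphism

section Deformation

variable {C} {D : CycleSet X} {φ : Equiv.Perm X} (hD : ∀ x y : X, D.op x y = φ (C.op x y))
include hD

theorem sigma_eq_mul_sigma (x : X) : D.sigma x = φ * C.sigma x := by
  ext y
  simp [hD]

theorem mem_permGroup_of_coprime (hφ : ∀ x y : X, φ (C.op x y) = C.op (φ x) (φ y))
    (hcop : (orderOf φ).Coprime (Nat.card C.permGroup)) {x₀ : X} (hx₀ : φ x₀ = x₀) :
    φ ∈ D.permGroup := by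
  have hcop₀ : (orderOf φ).Coprime (orderOf (C.sigma x₀)) :=
    hcop.coprime_dvd_right (C.permGroup.orderOf_dvd_natCard (C.sigma_mem_permGroup x₀))
  have hφ_pow : φ ∈ Subgroup.zpowers (D.sigma x₀) := by
    rw [sigma_eq_mul_sigma hD]
    exact (commute_sigma_of_apply_eq hφ hx₀).mem_zpowers_mul_of_coprime hcop₀
  exact Subgroup.zpowers_le.mpr (D.sigma_mem_permGroup x₀) hφ_pow

variable (hφD : φ ∈ D.permGroup)
include hφD

theorem permGroup_le_of_mem : C.permGroup ≤ D.permGroup := by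
  rw [permGroup, Subgroup.closure_le]
  rintro _ ⟨x, rfl⟩
  have hx : C.sigma x = φ⁻¹ * D.sigma x := by rw [sigma_eq_mul_sigma hD, inv_mul_cancel_left]
  rw [hx]
  exact mul_mem (inv_mem hφD) (D.sigma_mem_permGroup x)

theorem permGroup_eq_closure_of_mem :
    D.permGroup = Subgroup.closure ((C.permGroup : Set (Equiv.Perm X)) ∪ {φ}) := by
  apply le_antisymm
  · rw [permGroup, Subgroup.closure_le]
    rintro _ ⟨x, rfl⟩
    rw [sigma_eq_mul_sigma hD]
    exact mul_mem (Subgroup.subset_closure (Or.inr rfl))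
      (Subgroup.subset_closure (Or.inl (C.sigma_mem_permGroup x)))
  · rw [Subgroup.closure_le, Set.union_subset_iff, Set.singleton_subset_iff]
    exact ⟨permGroup_le_of_mem hD hφD, hφD⟩

theorem permGroup_le_normalizer_of_mem (hφ : ∀ x y : X, φ (C.op x y) = C.op (φ x) (φ y)) :
    D.permGroup ≤ Subgroup.normalizer (C.permGroup : Set (Equiv.Perm X)) := by
  rw [permGroup_eq_closure_of_mem hD hφD, Subgroup.closure_le, Set.union_subset_iff,
    Set.singleton_subset_iff]
  exact ⟨Subgroup.le_normalizer, mem_normalizer_permGroup hφ⟩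

end Deformation

end CycleSet

theorem stmt15_general {X : Type*} (C : CycleSet X) (φ : Equiv.Perm X)
    (hhom : ∀ x y : X, φ (C.op x y) = C.op (φ x) (φ y))
    (m : ℕ) (hm : orderOf φ = m)
    (hgcd : Nat.gcd m (Nat.card C.permGroup) = 1)
    (hfix : ∃ x : X, φ x = x)
    (D : CycleSet X) (hD : ∀ x y : X, D.op x y = φ (C.op x y)) :
    D.permGroup = Subgroup.closure ((C.permGroup : Set (Equiv.Perm X)) ∪ {φ}) ∧
    C.permGroup ≤ D.permGroup ∧
    (∀ g ∈ D.permGroup, ∀ h ∈ C.permGroup, g * h * g⁻¹ ∈ C.permGroup) ∧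
    C.permGroup ⊓ Subgroup.zpowers φ = ⊥ ∧
    (C.Indecomposable → D.Indecomposable) := by
  subst hm
  obtain ⟨x₀, hx₀⟩ := hfix
  have hφD : φ ∈ D.permGroup := CycleSet.mem_permGroup_of_coprime hD hhom hgcd hx₀
  have hle : C.permGroup ≤ D.permGroup := CycleSet.permGroup_le_of_mem hD hφD
  have hnorm : D.permGroup ≤ Subgroup.normalizer (C.permGroup : Set (Equiv.Perm X)) :=
    CycleSet.permGroup_le_normalizer_of_mem hD hφD hhom
  have hcop : (Nat.card C.permGroup).Coprime (Nat.card (Subgroup.zpowers φ)) := by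
    rwa [Nat.card_zpowers, Nat.coprime_comm]
  refine ⟨CycleSet.permGroup_eq_closure_of_mem hD hφD, hle, ?_,
    disjoint_iff.mp (Subgroup.disjoint_of_coprime_natCard hcop), fun hC => hC.of_permGroup_le hle⟩
  exact fun g hg h hh => (Subgroup.mem_normalizer_iff.mp (hnorm hg) h).mp hh

theorem stmt15 {X : Type*} [Finite X] (C : CycleSet X) (φ : Equiv.Perm X)
    (hhom : ∀ x y : X, φ (C.op x y) = C.op (φ x) (φ y))
    (m : ℕ) (hm : orderOf φ = m)
    (hgcd : Nat.gcd m (Nat.card C.permGroup) = 1)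
    (hfix : ∃ x : X, φ x = x)
    (D : CycleSet X) (hD : ∀ x y : X, D.op x y = φ (C.op x y)) :
    D.permGroup = Subgroup.closure ((C.permGroup : Set (Equiv.Perm X)) ∪ {φ}) ∧
    C.permGroup ≤ D.permGroup ∧
    (∀ g ∈ D.permGroup, ∀ h ∈ C.permGroup, g * h * g⁻¹ ∈ C.permGroup) ∧
    C.permGroup ⊓ Subgroup.zpowers φ = ⊥ ∧
    (C.Indecomposable → D.Indecomposable) :=
  stmt15_general C φ hhom m hm hgcd hfix D hD
end
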